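/- arXiv:1609.04235 — 6 statements merged into one kernel-verified Lean document; each statement's English description precedes it below -/
import Mathlib

section
/- Fix an s×t matrix A over a finite alphabet Γ, and let à be its folding, of dimensions s'×t'. There exist constants c₁, k₁, c₂, k₂ > 0 (depending only on A) such that for every real ε ∈ (0,1] and every integer n ≥ c₁·ε^{-k₁}: every n×n matrix M over Γ that contains at least ε·n^{s'+t'} copies of à also contains at least c₂·ε^{k₂}·n^{s+t} copies of A. -/
open Finset

/-- `(r, c)` is a copy of the `s × t` matrix `A` inside the `m × n` matrix `M`. -/
def IsCopy {Γ : Type*} {s t m n : ℕ} (A : Fin s → Fin t → Γ) (M : Fin m → Fin n → Γ)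
    (r : Fin s → Fin m) (c : Fin t → Fin n) : Prop :=
  StrictMono r ∧ StrictMono c ∧ ∀ i j, M (r i) (c j) = A i j

/-- The number of copies of `A` in `M`. -/
noncomputable def copyCount {Γ : Type*} {s t m n : ℕ} (A : Fin s → Fin t → Γ)
    (M : Fin m → Fin n → Γ) : ℕ :=
  Set.ncard {p : (Fin s → Fin m) × (Fin t → Fin n) | IsCopy A M p.1 p.2}

/-- The transpose of a matrix. -/
def transposeM {Γ : Type*} {a b : ℕ} (A : Fin a → Fin b → Γ) : Fin b → Fin a → Γ :=
  fun j i => A i j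

/-- The rows of `A` that are kept when deleting every row equal to the row immediately
preceding it: a row is kept iff it has no predecessor, or differs from its predecessor. -/
def keptRows {Γ : Type*} [DecidableEq Γ] {s t : ℕ} (A : Fin s → Fin t → Γ) : Finset (Fin s) :=
  univ.filter fun i => ∀ j : Fin s, (j : ℕ) + 1 = (i : ℕ) → A j ≠ A i

/-- The matrix obtained from `A` by deleting every row equal to its predecessor. -/
noncomputable def rowFold {Γ : Type*} [DecidableEq Γ] {s t : ℕ} (A : Fin s → Fin t → Γ) :
    Fin (keptRows A).card → Fin t → Γ :=
  fun i j => A ((keptRows A).orderIsoOfFin rfl i : Fin s) j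

/-- The folding of `A`: first delete every row equal to its predecessor, then delete every
column (of the result) equal to its predecessor. -/
noncomputable def fold {Γ : Type*} [DecidableEq Γ] {s t : ℕ} (A : Fin s → Fin t → Γ) :
    Fin (keptRows A).card → Fin (keptRows (transposeM (rowFold A))).card → Γ :=
  transposeM (rowFold (transposeM (rowFold A)))

/-!
Deleting a row equal to its predecessor is undone by composing with a monotone map of the row
indices, so it suffices to show that many copies of `X` force many copies of `X ∘ g` for monotone
`g`, and to transpose for the columns. Fix a column tuple `c` carrying many copies of `X`, and let
`Aᵢ` be the set of rows of `M` that agree with row `i` of `X` on `c`. Many increasing tuples in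
`A₀ × ⋯ × A_{a-1}` yield, by peeling off the last coordinate, consecutive blocks
`D₀ < ⋯ < D_{a-1}` with `Dᵢ ⊆ Aᵢ`, each of linear size. Cutting every `Dᵢ` into `s` equal pieces
and giving row `j` of `X ∘ g` the `j`-th piece of `D_{g j}` produces `s` consecutive sets of linear
size whose product consists of copies of `X ∘ g`.
-/

lemma Finset.le_card_filter_of_le_sum {ι : Type*} (S : Finset ι) (f : ι → ℝ) {δ M N : ℝ}
    (hδ : 0 ≤ δ) (hM : 0 < M) (hf : ∀ x ∈ S, f x ≤ M) (hS : (S.card : ℝ) ≤ N)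
    (hsum : δ * N * M ≤ ∑ x ∈ S, f x) :
    δ / 2 * N ≤ (S.filter fun x => δ / 2 * M ≤ f x).card := by
  set G := S.filter fun x => δ / 2 * M ≤ f x
  have hG : ∑ x ∈ G, f x ≤ G.card * M := by
    simpa using sum_le_sum fun x hx => hf x (mem_filter.mp hx).1
  have hGc : ∑ x ∈ S.filter (fun x => ¬ δ / 2 * M ≤ f x), f x ≤ N * (δ / 2 * M) := by
    calc _ ≤ ∑ x ∈ S.filter (fun x => ¬ δ / 2 * M ≤ f x), δ / 2 * M :=
          sum_le_sum fun x hx => (not_le.mp (mem_filter.mp hx).2).le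
      _ ≤ N * (δ / 2 * M) := by
          rw [sum_const, nsmul_eq_mul]
          gcongr
          exact le_trans (by exact_mod_cast card_filter_le _ _) hS
  rw [← sum_filter_add_sum_filter_not S (fun x => δ / 2 * M ≤ f x)] at hsum
  nlinarith

section OrderedFamily

variable {α : Type*}

def IsOrderedFamily {ι : Type*} [Preorder ι] [Preorder α] (D : ι → Finset α) : Prop :=
  ∀ ⦃i j⦄, i < j → ∀ x ∈ D i, ∀ y ∈ D j, x < y

lemma IsOrderedFamily.strictMono_of_mem_piFinset {ι : Type*} [Preorder ι] [Preorder α]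
    [DecidableEq ι] [Fintype ι] {D : ι → Finset α} (hD : IsOrderedFamily D) {r : ι → α}
    (hr : r ∈ Fintype.piFinset D) : StrictMono r :=
  fun _ _ hij => hD hij _ (Fintype.mem_piFinset.mp hr _) _ (Fintype.mem_piFinset.mp hr _)

lemma IsOrderedFamily.snoc [Preorder α] {k : ℕ} {D : Fin k → Finset α} (hD : IsOrderedFamily D)
    {E : Finset α} (hE : ∀ i, ∀ x ∈ D i, ∀ y ∈ E, x < y) :
    IsOrderedFamily (Fin.snoc D E : Fin (k + 1) → Finset α) := by
  intro i j hij
  induction j using Fin.lastCases with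
  | last =>
    induction i using Fin.lastCases with
    | last => exact absurd hij (lt_irrefl _)
    | cast i => simpa using hE i
  | cast j =>
    induction i using Fin.lastCases with
    | last => exact absurd hij (not_lt.mpr (Fin.le_last _))
    | cast i => simpa using hD (Fin.castSucc_lt_castSucc_iff.mp hij)

lemma Finset.exists_isOrderedFamily_card_eq [LinearOrder α] (E : Finset α) {s q : ℕ}
    (h : s * q ≤ E.card) :
    ∃ D : Fin s → Finset α, (∀ a, D a ⊆ E) ∧ IsOrderedFamily D ∧ ∀ a, (D a).card = q := by
  classical
  let f : Fin s × Fin q → α := fun p => E.orderEmbOfFin rfl (Fin.castLE h (finProdFinEquiv p))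
  have hf : ∀ {a b : Fin s} (i j : Fin q), a < b → f (a, i) < f (b, j) := by
    intro a b i j hab
    refine (E.orderEmbOfFin rfl).strictMono (Fin.mk_lt_mk.mpr ?_)
    simp only [finProdFinEquiv_apply_val]
    have : q * (a + 1) ≤ q * b := Nat.mul_le_mul_left q hab
    nlinarith [i.2]
  refine ⟨fun a => univ.image fun i => f (a, i), fun a => ?_, ?_, fun a => ?_⟩
  · simp only [image_subset_iff, mem_univ, forall_const]
    exact fun i => E.orderEmbOfFin_mem rfl _
  · intro a b hab
    simp only [mem_image, mem_univ, true_and, forall_exists_index, forall_apply_eq_imp_iff]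
    exact fun i j => hf i j hab
  · rw [card_image_of_injective _ ?_, card_univ, Fintype.card_fin]
    intro i j hij
    simpa [f, Fin.ext_iff] using hij

lemma IsOrderedFamily.exists_comp_monotone [LinearOrder α] {k s q : ℕ} {D : Fin k → Finset α}
    (hD : IsOrderedFamily D) {g : Fin s → Fin k} (hg : Monotone g)
    (hq : ∀ i, s * q ≤ (D i).card) :
    ∃ E : Fin s → Finset α, (∀ j, E j ⊆ D (g j)) ∧ IsOrderedFamily E ∧ ∀ j, (E j).card = q := by
  choose F hFD hF hFcard using fun i => (D i).exists_isOrderedFamily_card_eq (hq i)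
  refine ⟨fun j => F (g j) j, fun j => hFD _ _, fun j j' hjj' x hx y hy => ?_,
    fun j => hFcard _ _⟩
  rcases (hg hjj'.le).lt_or_eq with hlt | heq
  · exact hD hlt x (hFD _ _ hx) y (hFD _ _ hy)
  · exact hF (g j) hjj' x hx y (heq ▸ hy)

section StrictTuples

variable [Fintype α] [LinearOrder α]

open scoped Classical in
noncomputable def strictTuples {k : ℕ} (A : Fin k → Finset α) : Finset (Fin k → α) :=
  univ.filter fun r => StrictMono r ∧ ∀ i, r i ∈ A i

@[simp]
lemma mem_strictTuples {k : ℕ} {A : Fin k → Finset α} {r : Fin k → α} :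
    r ∈ strictTuples A ↔ StrictMono r ∧ ∀ i, r i ∈ A i := by
  simp [strictTuples]

lemma card_strictTuples_le {k : ℕ} (A : Fin k → Finset α) :
    (strictTuples A).card ≤ Fintype.card α ^ k := by
  simpa using card_le_univ (strictTuples A)

lemma card_strictTuples_le_sum {k : ℕ} (A : Fin (k + 1) → Finset α) :
    (strictTuples A).card ≤
      ∑ x ∈ A (Fin.last k), (strictTuples fun i => (A i.castSucc).filter (· < x)).card := by
  classical
  rw [card_eq_sum_card_fiberwise (f := fun r => r (Fin.last k))
    fun r hr => (mem_strictTuples.mp hr).2 _]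
  refine sum_le_sum fun x _ => card_le_card_of_injOn Fin.init (fun r hr => ?_) ?_
  · simp only [coe_filter, mem_strictTuples] at hr
    obtain ⟨⟨hmono, hmem⟩, rfl⟩ := hr
    refine mem_strictTuples.mpr ⟨hmono.comp Fin.strictMono_castSucc, fun i => ?_⟩
    exact mem_filter.mpr ⟨hmem _, hmono (Fin.castSucc_lt_last i)⟩
  · intro r₁ h₁ r₂ h₂ h
    simp only [coe_filter] at h₁ h₂
    rw [← Fin.snoc_init_self r₁, ← Fin.snoc_init_self r₂, h, h₁.2, h₂.2]

lemma exists_isOrderedFamily_of_le_card_strictTuples :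
    ∀ {k : ℕ} (A : Fin k → Finset α) {δ : ℝ}, 0 < δ →
      δ * Fintype.card α ^ k ≤ (strictTuples A).card →
      ∃ D : Fin k → Finset α, (∀ i, D i ⊆ A i) ∧ IsOrderedFamily D ∧
        ∀ i, δ / 2 ^ k * Fintype.card α ≤ (D i).card
  | 0, _, _, _, _ => ⟨fun i => i.elim0, fun i => i.elim0, fun i => i.elim0, fun i => i.elim0⟩
  | k + 1, A, δ, hδ, h => by
    set N := Fintype.card α
    rcases (Nat.zero_le N).eq_or_lt with hN | hN
    · exact ⟨fun _ => ∅, fun _ => empty_subset _, fun _ _ _ x hx => absurd hx (by simp),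
        fun _ => by simp [← hN]⟩
    set f : α → ℝ := fun x => (strictTuples fun i => (A i.castSucc).filter (· < x)).card
    set Dl := (A (Fin.last k)).filter fun x => δ / 2 * N ^ k ≤ f x
    have hDl : δ / 2 * N ≤ Dl.card := by
      refine le_card_filter_of_le_sum _ f hδ.le (by positivity)
        (fun x _ => by simp only [f]; exact_mod_cast card_strictTuples_le _)
        (by exact_mod_cast card_le_univ _) ?_
      calc δ * N * N ^ k = δ * N ^ (k + 1) := by ring
        _ ≤ _ := h
        _ ≤ _ := by simp only [f]; exact_mod_cast card_strictTuples_le_sum A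
    have hDl_pos : (0 : ℝ) < Dl.card := hDl.trans_lt' (by positivity)
    have hDl_ne : Dl.Nonempty := card_pos.mp (by exact_mod_cast hDl_pos)
    set x₀ := Dl.min' hDl_ne
    obtain ⟨D, hDA, hD, hDcard⟩ := exists_isOrderedFamily_of_le_card_strictTuples
      (fun i => (A i.castSucc).filter (· < x₀)) (half_pos hδ)
      (mem_filter.mp (Dl.min'_mem hDl_ne)).2
    refine ⟨Fin.snoc D Dl, fun i => ?_, hD.snoc fun i x hx y hy => ?_, fun i => ?_⟩
    · induction i using Fin.lastCases with
      | last => rw [Fin.snoc_last]; exact filter_subset _ _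
      | cast i => simpa using (hDA i).trans (filter_subset _ _)
    · exact ((mem_filter.mp (hDA i hx)).2).trans_le (Dl.min'_le y hy)
    · induction i using Fin.lastCases with
      | last =>
        refine le_trans ?_ (by simpa using hDl)
        gcongr
        exact le_self_pow₀ one_le_two k.succ_ne_zero
      | cast i => simpa [pow_succ', div_div] using hDcard i

lemma pow_le_card_strictTuples_comp {k s q : ℕ}
    (A : Fin k → Finset α) {g : Fin s → Fin k} (hg : Monotone g) {δ : ℝ} (hδ : 0 < δ)
    (hA : δ * Fintype.card α ^ k ≤ (strictTuples A).card)
    (hq : s * q ≤ δ / 2 ^ k * Fintype.card α) :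
    q ^ s ≤ (strictTuples (A ∘ g)).card := by
  classical
  obtain ⟨D, hDA, hD, hDcard⟩ := exists_isOrderedFamily_of_le_card_strictTuples A hδ hA
  obtain ⟨E, hED, hE, hEcard⟩ :=
    hD.exists_comp_monotone hg fun i => by exact_mod_cast hq.trans (hDcard i)
  calc q ^ s = (Fintype.piFinset E).card := by simp [hEcard]
    _ ≤ _ := card_le_card fun r hr => mem_strictTuples.mpr
      ⟨hE.strictMono_of_mem_piFinset hr, fun j => hDA _ (hED j (Fintype.mem_piFinset.mp hr j))⟩

end StrictTuples

end OrderedFamily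

section Copies

variable {Γ : Type*} {a b s m n : ℕ}

open scoped Classical in
noncomputable def rowCopies (X : Fin a → Fin b → Γ) (M : Fin m → Fin n → Γ)
    (c : Fin b → Fin n) : Finset (Fin a → Fin m) :=
  univ.filter fun r => IsCopy X M r c

open scoped Classical in
noncomputable def matchingRows (X : Fin a → Fin b → Γ) (M : Fin m → Fin n → Γ)
    (c : Fin b → Fin n) (i : Fin a) : Finset (Fin m) :=
  univ.filter fun y => ∀ k, M y (c k) = X i k

lemma copyCount_eq_sum_card_rowCopies (X : Fin a → Fin b → Γ) (M : Fin m → Fin n → Γ) :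
    copyCount X M = ∑ c, (rowCopies X M c).card := by
  classical
  rw [copyCount, Set.ncard_eq_toFinset_card', Set.toFinset_ofPred, card_filter,
    Fintype.sum_prod_type_right]
  simp only [rowCopies, card_filter]

lemma copyCount_transposeM (X : Fin a → Fin b → Γ) (M : Fin m → Fin n → Γ) :
    copyCount (transposeM X) (transposeM M) = copyCount X M := by
  have h : {p : (Fin b → Fin n) × (Fin a → Fin m) | IsCopy (transposeM X) (transposeM M) p.1 p.2}
      = Prod.swap '' {p | IsCopy X M p.1 p.2} := by
    ext ⟨c, r⟩
    simp only [IsCopy, transposeM, Set.mem_ofPred_eq, Set.mem_image, Prod.exists,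
      Prod.swap_prod_mk, Prod.mk.injEq]
    constructor
    · rintro ⟨hc, hr, hcr⟩
      exact ⟨r, c, ⟨hr, hc, fun i j => hcr j i⟩, rfl, rfl⟩
    · rintro ⟨r', c', ⟨hr, hc, hcr⟩, rfl, rfl⟩
      exact ⟨hc, hr, fun i j => hcr j i⟩
  rw [copyCount, copyCount, h, Set.ncard_image_of_injective _ Prod.swap_injective]

lemma strictMono_of_mem_rowCopies {X : Fin a → Fin b → Γ} {M : Fin m → Fin n → Γ}
    {c : Fin b → Fin n} {r : Fin a → Fin m} (hr : r ∈ rowCopies X M c) : StrictMono c := by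
  simp only [rowCopies, mem_filter] at hr
  exact hr.2.2.1

lemma rowCopies_eq_strictTuples (X : Fin a → Fin b → Γ) (M : Fin m → Fin n → Γ)
    {c : Fin b → Fin n} (hc : StrictMono c) :
    rowCopies X M c = strictTuples (matchingRows X M c) := by
  ext r
  simp only [rowCopies, matchingRows, mem_filter, mem_univ, true_and, mem_strictTuples]
  unfold IsCopy
  exact ⟨fun ⟨hr, _, h⟩ => ⟨hr, fun i k => h i k⟩, fun ⟨hr, h⟩ => ⟨hr, hc, h⟩⟩

lemma pow_le_card_rowCopies_comp (X : Fin a → Fin b → Γ) (M : Fin m → Fin n → Γ)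
    {c : Fin b → Fin n} (hc : StrictMono c) {g : Fin s → Fin a} (hg : Monotone g) {δ : ℝ}
    (hδ : 0 < δ) {q : ℕ} (hX : δ * m ^ a ≤ (rowCopies X M c).card)
    (hq : s * q ≤ δ / 2 ^ a * m) :
    q ^ s ≤ (rowCopies (X ∘ g) M c).card := by
  rw [rowCopies_eq_strictTuples _ _ hc] at hX ⊢
  exact pow_le_card_strictTuples_comp (matchingRows X M c) hg hδ (by rwa [Fintype.card_fin])
    (by rwa [Fintype.card_fin])

end Copies

section ForcesManyCopies

variable {Γ : Type*}

def ForcesManyCopies {a b a' b' : ℕ} (X : Fin a → Fin b → Γ) (Y : Fin a' → Fin b' → Γ) : Prop :=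
  ∃ c₁ c₂ : ℝ, ∃ k₁ k₂ : ℕ, 0 < c₁ ∧ 0 < c₂ ∧ 0 < k₁ ∧ 0 < k₂ ∧
    ∀ ε : ℝ, 0 < ε → ε ≤ 1 → ∀ n : ℕ, c₁ / ε ^ k₁ ≤ (n : ℝ) →
      ∀ M : Fin n → Fin n → Γ, ε * (n : ℝ) ^ (a + b) ≤ (copyCount X M : ℝ) →
        c₂ * ε ^ k₂ * (n : ℝ) ^ (a' + b') ≤ (copyCount Y M : ℝ)

lemma forcesManyCopies_comp_of_monotone {a b s : ℕ} (X : Fin a → Fin b → Γ)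
    {g : Fin s → Fin a} (hg : Monotone g) : ForcesManyCopies X (X ∘ g) := by
  set C : ℝ := 2 ^ (a + 2) * (s + 1)
  refine ⟨C, 1 / 2 * (1 / C) ^ s, 1, s + 1, by positivity, by positivity, one_pos, s.succ_pos,
    fun ε hε _ n hn M hM => ?_⟩
  rw [pow_one, div_le_iff₀ hε] at hn
  have hn0 : 0 < (n : ℝ) := pos_of_mul_pos_left (hn.trans_lt' (by positivity)) hε.le
  set G := univ.filter fun c => ε / 2 * (n : ℝ) ^ a ≤ (rowCopies X M c).card
  have hG : ε / 2 * (n : ℝ) ^ b ≤ G.card := by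
    refine le_card_filter_of_le_sum _ _ hε.le (by positivity)
      (fun c _ => by exact_mod_cast (card_le_univ (rowCopies X M c)).trans_eq (by simp))
      (by simp) ?_
    rw [mul_assoc, ← pow_add, add_comm]
    exact_mod_cast copyCount_eq_sum_card_rowCopies X M ▸ hM
  set x := ε * n / (2 ^ (a + 1) * (s + 1))
  set q := ⌊x⌋₊
  have hx : 2 ≤ x := by
    rw [le_div_iff₀ (by positivity)]
    calc 2 * (2 ^ (a + 1) * (s + 1)) = C := by ring
      _ ≤ ε * n := by linarith
  have hqx : ε * n / C ≤ q := by
    have : x / 2 = ε * n / C := by simp only [x, C]; field_simp; ring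
    linarith [Nat.sub_one_lt_floor x]
  have hsq : s * q ≤ ε / 2 / 2 ^ a * n :=
    calc s * (q : ℝ) ≤ (s + 1) * x :=
          mul_le_mul (by linarith) (Nat.floor_le (by positivity)) q.cast_nonneg (by positivity)
      _ = ε / 2 / 2 ^ a * n := by simp only [x]; field_simp; ring
  have hcol : ∀ c ∈ G, q ^ s ≤ (rowCopies (X ∘ g) M c).card := by
    intro c hcG
    have hc := (mem_filter.mp hcG).2
    have hpos : (0 : ℝ) < (rowCopies X M c).card := hc.trans_lt' (by positivity)
    obtain ⟨r, hr⟩ := card_pos.mp (by exact_mod_cast hpos)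
    exact pow_le_card_rowCopies_comp X M (strictMono_of_mem_rowCopies hr) hg (half_pos hε) hc hsq
  calc 1 / 2 * (1 / C) ^ s * ε ^ (s + 1) * (n : ℝ) ^ (s + b)
      = ε / 2 * (n : ℝ) ^ b * (ε * n / C) ^ s := by ring
    _ ≤ G.card * (q : ℝ) ^ s := by gcongr
    _ ≤ _ := by
      rw [copyCount_eq_sum_card_rowCopies]
      exact_mod_cast (card_nsmul_le_sum G _ _ hcol).trans (sum_le_univ_sum_of_nonneg (by simp))

variable {a b a' b' a'' b'' : ℕ} {X : Fin a → Fin b → Γ} {Y : Fin a' → Fin b' → Γ}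
  {Z : Fin a'' → Fin b'' → Γ}

lemma ForcesManyCopies.transpose (h : ForcesManyCopies X Y) :
    ForcesManyCopies (transposeM X) (transposeM Y) := by
  obtain ⟨c₁, c₂, k₁, k₂, hc₁, hc₂, hk₁, hk₂, h⟩ := h
  refine ⟨c₁, c₂, k₁, k₂, hc₁, hc₂, hk₁, hk₂, fun ε hε hε1 n hn M hM => ?_⟩
  have hX : copyCount (transposeM X) M = copyCount X (transposeM M) :=
    copyCount_transposeM X (transposeM M)
  have hY : copyCount (transposeM Y) M = copyCount Y (transposeM M) :=
    copyCount_transposeM Y (transposeM M)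
  rw [hX, add_comm] at hM
  rw [hY, add_comm]
  exact h ε hε hε1 n hn (transposeM M) hM

lemma ForcesManyCopies.trans (hXY : ForcesManyCopies X Y) (hYZ : ForcesManyCopies Y Z) :
    ForcesManyCopies X Z := by
  obtain ⟨c₁, c₂, k₁, k₂, hc₁, hc₂, hk₁, hk₂, hXY⟩ := hXY
  obtain ⟨d₁, d₂, l₁, l₂, hd₁, hd₂, hl₁, hl₂, hYZ⟩ := hYZ
  -- `Y`'s density `c₂ ε ^ k₂` is capped at `1` to be admissible for `hYZ`
  set c := min c₂ 1
  have hc : 0 < c := lt_min hc₂ one_pos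
  refine ⟨c₁ + d₁ / c ^ l₁, d₂ * c ^ l₂, k₁ + k₂ * l₁, k₂ * l₂, by positivity, by positivity,
    by positivity, by positivity, fun ε hε hε1 n hn M hM => ?_⟩
  have hpow : ∀ {i j : ℕ}, i ≤ j → ε ^ j ≤ ε ^ i := fun h => pow_le_pow_of_le_one hε.le hε1 h
  have hn₁ : c₁ / ε ^ k₁ ≤ n := le_trans (div_le_div₀ (by positivity)
    (le_add_of_nonneg_right (by positivity)) (by positivity) (hpow (Nat.le_add_right _ _))) hn
  have hY := hXY ε hε hε1 n hn₁ M hM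
  have hδ : c * ε ^ k₂ * (n : ℝ) ^ (a' + b') ≤ copyCount Y M :=
    le_trans (by gcongr; exact min_le_left _ _) hY
  have hδ1 : c * ε ^ k₂ ≤ 1 :=
    mul_le_one₀ (min_le_right _ _) (by positivity) (pow_le_one₀ hε.le hε1)
  have hZ := hYZ (c * ε ^ k₂) (by positivity) hδ1 n (le_trans ?_ hn) M hδ
  · calc d₂ * c ^ l₂ * ε ^ (k₂ * l₂) * (n : ℝ) ^ (a'' + b'')
        = d₂ * (c * ε ^ k₂) ^ l₂ * (n : ℝ) ^ (a'' + b'') := by ring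
      _ ≤ _ := hZ
  · calc d₁ / (c * ε ^ k₂) ^ l₁ = d₁ / c ^ l₁ / ε ^ (k₂ * l₁) := by
          rw [mul_pow, ← pow_mul, div_div]
      _ ≤ (c₁ + d₁ / c ^ l₁) / ε ^ (k₁ + k₂ * l₁) := div_le_div₀ (by positivity)
        (le_add_of_nonneg_left hc₁.le) (by positivity) (hpow (Nat.le_add_left _ _))

end ForcesManyCopies

section Folding

variable {Γ : Type*} [DecidableEq Γ] {s t : ℕ}

lemma eq_of_forall_notMem_keptRows {A : Fin s → Fin t → Γ} {i j : Fin s} (hij : i ≤ j)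
    (h : ∀ k, i < k → k ≤ j → k ∉ keptRows A) : A i = A j := by
  obtain ⟨d, hd⟩ : ∃ d, (j : ℕ) = i + d := ⟨j - i, by rw [Fin.le_def] at hij; omega⟩
  induction d generalizing j with
  | zero => rw [Fin.ext hd]
  | succ d ih =>
    have hj := h j (by rw [Fin.lt_def]; omega) le_rfl
    simp only [keptRows, mem_filter, mem_univ, true_and, not_forall, not_not] at hj
    obtain ⟨j', hj', hA⟩ := hj
    rw [← hA]
    refine ih (by rw [Fin.le_def]; omega) (fun k hik hkj => h k hik ?_) (by omega)
    rw [Fin.le_def] at hkj ⊢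
    omega

lemma exists_monotone_rowFold_comp_eq (A : Fin s → Fin t → Γ) :
    ∃ g : Fin s → Fin (keptRows A).card, Monotone g ∧ rowFold A ∘ g = A := by
  rcases s.eq_zero_or_pos with rfl | hs
  · exact ⟨Fin.elim0, fun i => i.elim0, funext fun i => i.elim0⟩
  have hne : ∀ j, ((keptRows A).filter (· ≤ j)).Nonempty := fun j =>
    ⟨⟨0, hs⟩, mem_filter.mpr
      ⟨mem_filter.mpr ⟨mem_univ _, fun i hi => absurd hi (Nat.succ_ne_zero _)⟩,
        Fin.mk_le_mk.mpr (Nat.zero_le _)⟩⟩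
  let μ : Fin s → Fin s := fun j => ((keptRows A).filter (· ≤ j)).max' (hne j)
  have hμ : ∀ j, μ j ∈ keptRows A ∧ μ j ≤ j := fun j => mem_filter.mp (max'_mem _ (hne j))
  have hμ_mono : Monotone μ := fun j j' hjj' => max'_subset _ fun x hx =>
    mem_filter.mpr ⟨(mem_filter.mp hx).1, (mem_filter.mp hx).2.trans hjj'⟩
  let e := (keptRows A).orderIsoOfFin rfl
  refine ⟨fun j => e.symm ⟨μ j, (hμ j).1⟩, fun j j' hjj' => e.symm.monotone (hμ_mono hjj'),
    funext fun j => funext fun k => ?_⟩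
  change A (e (e.symm _)) k = A j k
  rw [e.apply_symm_apply]
  exact congrFun (eq_of_forall_notMem_keptRows (hμ j).2 fun i hi hij hiA =>
    hi.not_ge (le_max' _ i (mem_filter.mpr ⟨hiA, hij⟩))) k

end Folding

theorem fold_removal_general {Γ : Type*} [DecidableEq Γ] {s t : ℕ}
    (A : Fin s → Fin t → Γ) :
    ∃ c₁ c₂ : ℝ, ∃ k₁ k₂ : ℕ, 0 < c₁ ∧ 0 < c₂ ∧ 0 < k₁ ∧ 0 < k₂ ∧
      ∀ ε : ℝ, 0 < ε → ε ≤ 1 → ∀ n : ℕ, c₁ / ε ^ k₁ ≤ (n : ℝ) →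
        ∀ M : Fin n → Fin n → Γ,
          ε * (n : ℝ) ^ ((keptRows A).card + (keptRows (transposeM (rowFold A))).card) ≤
            (copyCount (fold A) M : ℝ) →
          c₂ * ε ^ k₂ * (n : ℝ) ^ (s + t) ≤ (copyCount A M : ℝ) := by
  obtain ⟨g, hg, hA⟩ := exists_monotone_rowFold_comp_eq A
  obtain ⟨g', hg', hAT⟩ := exists_monotone_rowFold_comp_eq (transposeM (rowFold A))
  have h_fold : ForcesManyCopies (fold A) (rowFold A) := by
    have := (forcesManyCopies_comp_of_monotone (rowFold (transposeM (rowFold A))) hg').transpose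
    -- `fold A` unfolds to `transposeM (rowFold _)`, and `transposeM ∘ transposeM = id` by `rfl`
    rwa [hAT] at this
  have h_rowFold : ForcesManyCopies (rowFold A) A := by
    have := forcesManyCopies_comp_of_monotone (rowFold A) hg
    rwa [hA] at this
  exact h_fold.trans h_rowFold

/-- Fix an `s × t` matrix `A` over a finite alphabet `Γ`, with folding `Ã`
of dimensions `s' × t'`. There are constants `c₁, k₁, c₂, k₂ > 0` such that for every
`ε ∈ (0,1]` and every `n ≥ c₁·ε^{-k₁}`: every `n × n` matrix `M` over `Γ` containing at
least `ε·n^(s'+t')` copies of `Ã` contains at least `c₂·ε^(k₂)·n^(s+t)` copies of `A`. -/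
theorem fold_removal {Γ : Type*} [Fintype Γ] [DecidableEq Γ] {s t : ℕ}
    (A : Fin s → Fin t → Γ) :
    ∃ c₁ c₂ : ℝ, ∃ k₁ k₂ : ℕ, 0 < c₁ ∧ 0 < c₂ ∧ 0 < k₁ ∧ 0 < k₂ ∧
      ∀ ε : ℝ, 0 < ε → ε ≤ 1 → ∀ n : ℕ, c₁ / ε ^ k₁ ≤ (n : ℝ) →
        ∀ M : Fin n → Fin n → Γ,
          ε * (n : ℝ) ^ ((keptRows A).card + (keptRows (transposeM (rowFold A))).card) ≤
            (copyCount (fold A) M : ℝ) →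
          c₂ * ε ^ k₂ * (n : ℝ) ^ (s + t) ≤ (copyCount A M : ℝ) :=
  fold_removal_general A
end

section
/- Let A be an s×t matrix over a finite alphabet Γ, and let A' be an s'×t matrix obtained from A by deleting some set of rows of A, each of which is equal to the row of A immediately preceding it. There exist constants c₁, k₁, c₂, k₂ > 0 (depending only on A) such that for every real ε ∈ (0,1] and every integer n ≥ c₁·ε^{-k₁}: every n×n matrix M over Γ that contains at least ε·n^{s'+t} copies of A' also contains at least c₂·ε^{k₂}·n^{s+t} copies of A. -/
open Finset

section Counting

variable {Γ : Type*} {m t p q : ℕ}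

theorem Fin.sum_univ_insertNth {α β : Type*} [Fintype α] [AddCommMonoid β] (i : Fin (m + 1))
    (f : (Fin (m + 1) → α) → β) :
    ∑ r, f r = ∑ x, ∑ r₀, f (i.insertNth x r₀) := by
  rw [← (Fin.insertNthEquiv (fun _ => α) i).sum_comp, Fintype.sum_prod_type]
  rfl

open Classical in
noncomputable def rowExtensions (B : Fin (m + 1) → Fin t → Γ) (M : Fin p → Fin q → Γ)
    (i : Fin (m + 1)) (r : Fin m → Fin p) (c : Fin t → Fin q) : Finset (Fin p) :=
  {x | IsCopy B M (i.insertNth x r) c}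

open Classical in
theorem copyCount_eq_sum_card_rowExtensions (B : Fin (m + 1) → Fin t → Γ)
    (M : Fin p → Fin q → Γ) (i : Fin (m + 1)) :
    copyCount B M = ∑ r, ∑ c, #(rowExtensions B M i r c) := by
  have hcount : copyCount B M = ∑ r, ∑ c, if IsCopy B M r c then 1 else 0 := by
    rw [copyCount, Set.ncard_eq_toFinset_card', Set.toFinset_ofPred, card_filter,
      Fintype.sum_prod_type]
  rw [hcount, Fin.sum_univ_insertNth i, Finset.sum_comm]
  refine Fintype.sum_congr _ _ fun r₀ => ?_
  rw [Finset.sum_comm]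
  simp only [rowExtensions, card_filter]

theorem copyCount_le (A : Fin m → Fin t → Γ) (M : Fin p → Fin q → Γ) :
    copyCount A M ≤ p ^ m * q ^ t :=
  (Set.ncard_le_card _).trans_eq (by simp [Nat.card_eq_fintype_card])

theorem isCopy_insertNth_succ_insertNth {A : Fin (m + 2) → Fin t → Γ} {i : Fin (m + 1)}
    (hrow : ∀ l, A i.castSucc l = A i.succ l) {M : Fin p → Fin q → Γ} {r : Fin m → Fin p}
    {c : Fin t → Fin q} {x y : Fin p}
    (hx : IsCopy (A ∘ i.succ.succAbove) M (i.insertNth x r) c)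
    (hy : IsCopy (A ∘ i.succ.succAbove) M (i.insertNth y r) c) (hxy : x < y) :
    IsCopy A M (i.succ.insertNth y (i.insertNth x r)) c := by
  obtain ⟨hxr, hc, hxM⟩ := hx
  obtain ⟨hyr, -, hyM⟩ := hy
  refine ⟨(Fin.strictMono_insertNth_iff _ _ _).2 ⟨hxr, fun k hk => ?_, fun k hk => ?_⟩, hc, ?_⟩
  · exact (hxr.monotone (Fin.castSucc_lt_succ_iff.mp hk)).trans_lt (by simpa using hxy)
  · have hik : i < k := Fin.succ_le_castSucc_iff.mp hk
    obtain ⟨k', rfl⟩ := Fin.exists_succAbove_eq hik.ne'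
    simpa using hyr hik
  · intro a j
    cases a using Fin.succAboveCases i.succ with
    | x =>
      simpa [← hrow] using hyM i j
    | p k =>
      simpa using hxM k j

theorem Finset.sq_card_eq_two_mul_sum_card_filter_lt_add_card {α : Type*} [LinearOrder α]
    (I : Finset α) : #I ^ 2 = 2 * ∑ x ∈ I, #{y ∈ I | x < y} + #I := by
  have htrich (x y : α) :
      1 = (if x < y then 1 else 0) + (if y < x then 1 else 0) + (if x = y then 1 else 0) := by
    rcases lt_trichotomy x y with h | rfl | h
    · simp [h, h.not_gt, h.ne]
    · simp
    · simp [h, h.not_gt, h.ne']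
  calc #I ^ 2 = ∑ x ∈ I, ∑ y ∈ I, 1 := by simp [sq]
    _ = ∑ x ∈ I, ∑ y ∈ I, (if x < y then 1 else 0) + ∑ x ∈ I, ∑ y ∈ I, (if y < x then 1 else 0)
        + ∑ x ∈ I, ∑ y ∈ I, (if x = y then 1 else 0) := by
      simp only [← sum_add_distrib, ← htrich]
    _ = 2 * ∑ x ∈ I, #{y ∈ I | x < y} + #I := by
      rw [sum_comm (f := fun x y => if y < x then 1 else 0)]
      simp only [card_filter, two_mul, sum_ite_eq, sum_ite_mem, inter_self, ← card_eq_sum_ones]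

theorem sum_card_rowExtensions_pairs_le_copyCount {A : Fin (m + 2) → Fin t → Γ} {i : Fin (m + 1)}
    (hrow : ∀ l, A i.castSucc l = A i.succ l) (M : Fin p → Fin q → Γ) :
    ∑ r, ∑ c, ∑ x ∈ rowExtensions (A ∘ i.succ.succAbove) M i r c,
      #{y ∈ rowExtensions (A ∘ i.succ.succAbove) M i r c | x < y} ≤ copyCount A M := by
  set I := rowExtensions (A ∘ i.succ.succAbove) M i
  have hpairs (r c x) (hx : x ∈ I r c) :
      {y ∈ I r c | x < y} ⊆ rowExtensions A M i.succ (i.insertNth x r) c := by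
    intro y hy
    simp only [I, rowExtensions, mem_filter, mem_univ, true_and] at hx hy ⊢
    exact isCopy_insertNth_succ_insertNth hrow hx hy.1 hy.2
  calc ∑ r, ∑ c, ∑ x ∈ I r c, #{y ∈ I r c | x < y}
      = ∑ x, ∑ r, ∑ c, if x ∈ I r c then #{y ∈ I r c | x < y} else 0 := by
        conv_rhs => rw [sum_comm]; enter [2, r]; rw [sum_comm]
        simp only [sum_ite_mem, univ_inter]
    _ ≤ ∑ x, ∑ r, ∑ c, #(rowExtensions A M i.succ (i.insertNth x r) c) := by
        gcongr with x _ r _ c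
        split_ifs with hx
        · exact card_le_card (hpairs r c x hx)
        · exact Nat.zero_le _
    _ = copyCount A M := by
        rw [copyCount_eq_sum_card_rowExtensions A M i.succ, Fin.sum_univ_insertNth i]

theorem copyCount_comp_succAbove_sq_le {A : Fin (m + 2) → Fin t → Γ} {i : Fin (m + 1)}
    (hrow : ∀ l, A i.castSucc l = A i.succ l) (M : Fin p → Fin q → Γ) :
    copyCount (A ∘ i.succ.succAbove) M ^ 2 ≤
      p ^ m * q ^ t * (2 * copyCount A M + copyCount (A ∘ i.succ.succAbove) M) := by
  set I := rowExtensions (A ∘ i.succ.succAbove) M i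
  have hB : copyCount (A ∘ i.succ.succAbove) M =
      ∑ φ : (Fin m → Fin p) × (Fin t → Fin q), #(I φ.1 φ.2) := by
    rw [copyCount_eq_sum_card_rowExtensions _ M i, Fintype.sum_prod_type]
  calc copyCount (A ∘ i.succ.succAbove) M ^ 2
      = (∑ φ : (Fin m → Fin p) × (Fin t → Fin q), #(I φ.1 φ.2)) ^ 2 := by rw [hB]
    _ ≤ #univ * ∑ φ : (Fin m → Fin p) × (Fin t → Fin q), #(I φ.1 φ.2) ^ 2 :=
        sq_sum_le_card_mul_sum_sq
    _ = p ^ m * q ^ t * (2 * ∑ r, ∑ c, ∑ x ∈ I r c, #{y ∈ I r c | x < y}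
          + copyCount (A ∘ i.succ.succAbove) M) := by
        simp only [sq_card_eq_two_mul_sum_card_filter_lt_add_card, sum_add_distrib, ← mul_sum, hB,
          Fintype.sum_prod_type, card_univ, Fintype.card_prod, Fintype.card_fun, Fintype.card_fin]
    _ ≤ p ^ m * q ^ t * (2 * copyCount A M + copyCount (A ∘ i.succ.succAbove) M) := by
        gcongr
        exact sum_card_rowExtensions_pairs_le_copyCount hrow M

end Counting

theorem div_pow_le_div_pow_of_le_one {𝕜 : Type*} [Field 𝕜] [LinearOrder 𝕜]
    [IsStrictOrderedRing 𝕜] {c C ε : 𝕜} {k K : ℕ} (hc : 0 ≤ c) (hcC : c ≤ C)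
    (hε : 0 < ε) (hε1 : ε ≤ 1) (hkK : k ≤ K) : c / ε ^ k ≤ C / ε ^ K :=
  div_le_div₀ (hc.trans hcC) hcC (pow_pos hε K) (pow_le_pow_of_le_one hε.le hε1 hkK)

def DensityForces {Γ : Type*} {s' s t : ℕ} (A' : Fin s' → Fin t → Γ) (A : Fin s → Fin t → Γ) :
    Prop :=
  ∃ c₁ c₂ : ℝ, ∃ k₁ k₂ : ℕ, 0 < c₁ ∧ 0 < c₂ ∧ 0 < k₁ ∧ 0 < k₂ ∧
    ∀ ε : ℝ, 0 < ε → ε ≤ 1 → ∀ n : ℕ, c₁ / ε ^ k₁ ≤ (n : ℝ) →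
      ∀ M : Fin n → Fin n → Γ,
        ε * (n : ℝ) ^ (s' + t) ≤ (copyCount A' M : ℝ) →
        c₂ * ε ^ k₂ * (n : ℝ) ^ (s + t) ≤ (copyCount A M : ℝ)

namespace DensityForces

variable {Γ : Type*} {s₁ s₂ s₃ t : ℕ} {A₁ : Fin s₁ → Fin t → Γ} {A₂ : Fin s₂ → Fin t → Γ}
  {A₃ : Fin s₃ → Fin t → Γ}

theorem refl (A : Fin s₁ → Fin t → Γ) : DensityForces A A :=
  ⟨1, 1, 1, 1, one_pos, one_pos, one_pos, one_pos, fun _ _ _ _ _ _ h => by simpa using h⟩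

theorem trans (h₁₂ : DensityForces A₁ A₂) (h₂₃ : DensityForces A₂ A₃) : DensityForces A₁ A₃ := by
  obtain ⟨c₁, c₂, k₁, k₂, hc₁, hc₂, hk₁, hk₂, h₁₂⟩ := h₁₂
  obtain ⟨d₁, d₂, l₁, l₂, hd₁, hd₂, hl₁, hl₂, h₂₃⟩ := h₂₃
  -- the density handed on to `h₂₃` must not exceed `1`
  set e := min c₂ 1
  have he : 0 < e := lt_min hc₂ one_pos
  refine ⟨max c₁ (d₁ / e ^ l₁), d₂ * e ^ l₂, k₁ + k₂ * l₁, k₂ * l₂, lt_max_of_lt_left hc₁,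
    by positivity, by positivity, by positivity, ?_⟩
  intro ε hε hε1 n hn M hM
  have hδ : 0 < e * ε ^ k₂ := by positivity
  have hδ1 : e * ε ^ k₂ ≤ 1 :=
    mul_le_one₀ (min_le_right _ _) (by positivity) (pow_le_one₀ hε.le hε1)
  have hn₁ : c₁ / ε ^ k₁ ≤ n :=
    (div_pow_le_div_pow_of_le_one hc₁.le (le_max_left _ _) hε hε1 (by omega)).trans hn
  have hn₂ : d₁ / (e * ε ^ k₂) ^ l₁ ≤ n := by
    rw [mul_pow, ← pow_mul, ← div_div]
    exact (div_pow_le_div_pow_of_le_one (by positivity) (le_max_right _ _) hε hε1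
      (by omega)).trans hn
  have hM₂ : e * ε ^ k₂ * n ^ (s₂ + t) ≤ copyCount A₂ M := by
    refine le_trans ?_ (h₁₂ ε hε hε1 n hn₁ M hM)
    gcongr
    exact min_le_left _ _
  calc d₂ * e ^ l₂ * ε ^ (k₂ * l₂) * n ^ (s₃ + t) = d₂ * (e * ε ^ k₂) ^ l₂ * n ^ (s₃ + t) := by
        ring
    _ ≤ copyCount A₃ M := h₂₃ _ hδ hδ1 n hn₂ M hM₂

end DensityForces

theorem densityForces_comp_succAbove_succ {Γ : Type*} {m t : ℕ} {A : Fin (m + 2) → Fin t → Γ}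
    {i : Fin (m + 1)} (hrow : ∀ l, A i.castSucc l = A i.succ l) :
    DensityForces (A ∘ i.succ.succAbove) A := by
  refine ⟨2, 1 / 4, 2, 2, by norm_num, by norm_num, by norm_num, by norm_num, ?_⟩
  intro ε hε hε1 n hn M hM
  set B : ℝ := (copyCount (A ∘ i.succ.succAbove) M : ℝ)
  set C : ℝ := (copyCount A M : ℝ)
  set X : ℝ := (n : ℝ) ^ (m + t)
  have hn0 : (0 : ℝ) < n := lt_of_lt_of_le (by positivity) hn
  have hX : 0 < X := by positivity
  have hN : 2 ≤ ε ^ 2 * n := by rwa [div_le_iff₀ (by positivity), mul_comm] at hn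
  have hsq : B ^ 2 ≤ X * (2 * C + B) := by
    have := copyCount_comp_succAbove_sq_le hrow M
    simp only [B, C, X, pow_add]
    exact_mod_cast this
  have hBle : B ≤ n * X := by
    calc B ≤ ((n ^ (m + 1) * n ^ t : ℕ) : ℝ) := Nat.cast_le.mpr (copyCount_le _ M)
      _ = n * X := by push_cast; ring
  have hBge : ε * n * X ≤ B :=
    calc ε * n * X = ε * n ^ (m + 1 + t) := by ring
      _ ≤ B := hM
  have h1 : (ε * n * X) ^ 2 ≤ X * (2 * C + n * X) :=
    (pow_le_pow_left₀ (by positivity) hBge 2).trans (hsq.trans (by gcongr))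
  have h2 : ε ^ 2 * n ^ 2 * X ≤ 2 * C + n * X := by nlinarith
  have h3 : 2 * (n * X) ≤ ε ^ 2 * n ^ 2 * X := by nlinarith [mul_le_mul_of_nonneg_right hN hX.le]
  calc 1 / 4 * ε ^ 2 * (n : ℝ) ^ (m + 2 + t) = 1 / 4 * (ε ^ 2 * n ^ 2 * X) := by ring
    _ ≤ C := by linarith

theorem Fin.succ_succAbove_comp_predAbove_comp {α : Type*} {m : ℕ} {ρ : α → Fin (m + 2)}
    {i : Fin (m + 1)} (hi : i.succ ∉ Set.range ρ) : i.succ.succAbove ∘ i.predAbove ∘ ρ = ρ :=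
  funext fun x => Fin.succ_succAbove_predAbove fun h => hi ⟨x, h⟩

theorem StrictMono.predAbove_comp {s' m : ℕ} {ρ : Fin s' → Fin (m + 2)} (hρ : StrictMono ρ)
    {i : Fin (m + 1)} (hi : i.succ ∉ Set.range ρ) : StrictMono (i.predAbove ∘ ρ) := by
  intro a b hab
  have := hρ hab
  rw [← Fin.succ_succAbove_comp_predAbove_comp hi] at this
  exact (Fin.strictMono_succAbove _).lt_iff_lt.mp this

def OmitsOnlyRepeatedRows {Γ : Type*} {s s' t : ℕ} (A : Fin s → Fin t → Γ)
    (ρ : Fin s' → Fin s) : Prop :=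
  ∀ i : Fin s, i ∉ Set.range ρ → ∃ j : Fin s, (j : ℕ) + 1 = (i : ℕ) ∧ ∀ l, A i l = A j l

theorem OmitsOnlyRepeatedRows.comp_succAbove {Γ : Type*} {s' m t : ℕ}
    {A : Fin (m + 2) → Fin t → Γ} {ρ : Fin s' → Fin (m + 2)} {i : Fin (m + 1)}
    (h : OmitsOnlyRepeatedRows A ρ) (hi : i.succ ∉ Set.range ρ)
    (hmax : ∀ k ∉ Set.range ρ, k ≤ i.succ) :
    OmitsOnlyRepeatedRows (A ∘ i.succ.succAbove) (i.predAbove ∘ ρ) := by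
  intro k hk
  have hk' : i.succ.succAbove k ∉ Set.range ρ := by
    rintro ⟨x, hx⟩
    refine hk ⟨x, Fin.succAbove_right_injective (p := i.succ) ?_⟩
    rw [← hx]
    exact congrFun (Fin.succ_succAbove_comp_predAbove_comp hi) x
  have hki : k.castSucc < i.succ := (Fin.succAbove_lt_iff_castSucc_lt _ _).mp
    ((hmax _ hk').lt_of_ne (Fin.succAbove_ne _ _))
  rw [Fin.succAbove_of_castSucc_lt _ _ hki] at hk'
  obtain ⟨j, hj, hrow⟩ := h _ hk'
  have hjk : (j : ℕ) < k := by simp only [Fin.val_castSucc] at hj; omega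
  have hj' : i.succ.succAbove ⟨j, hjk.trans k.isLt⟩ = j :=
    (Fin.succAbove_of_castSucc_lt _ _ (lt_trans (by simpa [Fin.lt_def] using hjk) hki)).trans
      (Fin.ext rfl)
  refine ⟨⟨j, hjk.trans k.isLt⟩, by simpa using hj, fun l => ?_⟩
  simp only [Function.comp_apply, Fin.succAbove_of_castSucc_lt _ _ hki, hj', hrow]

theorem densityForces_comp_of_omitsOnlyRepeatedRows {Γ : Type*} {s s' t : ℕ}
    (A : Fin s → Fin t → Γ) {ρ : Fin s' → Fin s} (hρ : StrictMono ρ)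
    (h : OmitsOnlyRepeatedRows A ρ) : DensityForces (A ∘ ρ) A := by
  induction s using Nat.strong_induction_on generalizing s' with
  | _ s ih =>
  by_cases hsurj : Function.Surjective ρ
  · obtain rfl : s' = s := by simpa using Fintype.card_of_bijective ⟨hρ.injective, hsurj⟩
    obtain rfl : ρ = id := hρ.eq_id
    exact DensityForces.refl A
  -- Removing the last omitted row leaves the predecessor of every other omitted row in place.
  obtain ⟨i₀, hi₀, hmax⟩ : ∃ i₀ ∉ Set.range ρ, ∀ k ∉ Set.range ρ, k ≤ i₀ := by
    obtain ⟨i₀, hi₀⟩ := not_forall.mp hsurj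
    simpa using (univ.filter (· ∉ Set.range ρ)).exists_max_image id ⟨i₀, by simpa using hi₀⟩
  obtain ⟨j₀, hj₀, hrow₀⟩ := h i₀ hi₀
  obtain ⟨m, rfl⟩ : ∃ m, s = m + 2 := ⟨s - 2, by omega⟩
  obtain ⟨i, rfl⟩ : ∃ i : Fin (m + 1), i.succ = i₀ :=
    Fin.exists_succ_eq.mpr fun h => by simp [h] at hj₀
  obtain rfl : j₀ = i.castSucc := Fin.ext (by simpa using hj₀)
  have hreduced := ih (m + 1) (by omega) (A ∘ i.succ.succAbove) (hρ.predAbove_comp hi₀)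
    (h.comp_succAbove hi₀ hmax)
  rw [Function.comp_assoc, Fin.succ_succAbove_comp_predAbove_comp hi₀] at hreduced
  exact hreduced.trans (densityForces_comp_succAbove_succ fun l => (hrow₀ l).symm)

theorem row_unfold_removal_general {Γ : Type*} {s s' t : ℕ}
    (A : Fin s → Fin t → Γ) (A' : Fin s' → Fin t → Γ)
    (ρ : Fin s' → Fin s) (hρ : StrictMono ρ)
    (hA' : ∀ i j, A' i j = A (ρ i) j)
    (hdel : ∀ i : Fin s, i ∉ Set.range ρ →
      ∃ j : Fin s, (j : ℕ) + 1 = (i : ℕ) ∧ ∀ l, A i l = A j l) :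
    ∃ c₁ c₂ : ℝ, ∃ k₁ k₂ : ℕ, 0 < c₁ ∧ 0 < c₂ ∧ 0 < k₁ ∧ 0 < k₂ ∧
      ∀ ε : ℝ, 0 < ε → ε ≤ 1 → ∀ n : ℕ, c₁ / ε ^ k₁ ≤ (n : ℝ) →
        ∀ M : Fin n → Fin n → Γ,
          ε * (n : ℝ) ^ (s' + t) ≤ (copyCount A' M : ℝ) →
          c₂ * ε ^ k₂ * (n : ℝ) ^ (s + t) ≤ (copyCount A M : ℝ) := by
  obtain rfl : A' = A ∘ ρ := funext fun i => funext (hA' i)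
  exact densityForces_comp_of_omitsOnlyRepeatedRows A hρ hdel

/-- Let `A` be an `s × t` matrix over a finite alphabet `Γ` and let `A'`
be an `s' × t` matrix obtained from `A` by deleting some set of rows, each equal to the row
of `A` immediately preceding it (the kept rows are given by the strictly increasing map
`ρ`). There are constants `c₁, k₁, c₂, k₂ > 0` such that for every `ε ∈ (0,1]` and every
`n ≥ c₁·ε^{-k₁}`: every `n × n` matrix `M` over `Γ` containing at least `ε·n^(s'+t)` copies
of `A'` contains at least `c₂·ε^(k₂)·n^(s+t)` copies of `A`. -/
theorem row_unfold_removal {Γ : Type*} [Fintype Γ] {s s' t : ℕ}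
    (A : Fin s → Fin t → Γ) (A' : Fin s' → Fin t → Γ)
    (ρ : Fin s' → Fin s) (hρ : StrictMono ρ)
    (hA' : ∀ i j, A' i j = A (ρ i) j)
    (hdel : ∀ i : Fin s, i ∉ Set.range ρ →
      ∃ j : Fin s, (j : ℕ) + 1 = (i : ℕ) ∧ ∀ l, A i l = A j l) :
    ∃ c₁ c₂ : ℝ, ∃ k₁ k₂ : ℕ, 0 < c₁ ∧ 0 < c₂ ∧ 0 < k₁ ∧ 0 < k₂ ∧
      ∀ ε : ℝ, 0 < ε → ε ≤ 1 → ∀ n : ℕ, c₁ / ε ^ k₁ ≤ (n : ℝ) →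
        ∀ M : Fin n → Fin n → Γ,
          ε * (n : ℝ) ^ (s' + t) ≤ (copyCount A' M : ℝ) →
          c₂ * ε ^ k₂ * (n : ℝ) ^ (s + t) ≤ (copyCount A M : ℝ) :=
  row_unfold_removal_general A A' ρ hρ hA' hdel
end

section
/- Fix an s×t matrix A over an alphabet Γ. There exist constants c, k > 0 (depending only on A) such that for every real ε ∈ (0,1] and every integer n ≥ c·ε^{-k}: if an s×n matrix T over Γ contains at least ε·n pairwise-disjoint copies of A (each copy uses all s rows of T and a strictly increasing choice of t of its columns, and copies are pairwise disjoint exactly when their column sets are pairwise disjoint), then the total number of copies of A in T is at least (ε/(2t))^t · n^t. -/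
/-!
Any `t` of the disjoint copies combine into a copy of `A` that takes its `j`-th column from
the `j`-th of them, once they are enumerated greedily: the `j`-th is the remaining copy whose
`j`-th column is leftmost, so that column lies left of the `j`-th, hence of the `(j+1)`-th,
column of the next one. Disjointness makes this copy determine the `t` chosen ones (they are
exactly the copies it meets), so with `m ≥ εn` disjoint copies,
`copyCount A T ≥ m.choose t ≥ (εn / (2t))^t` as soon as `εn ≥ 2t`.
-/

theorem exists_diagonal_strictMono {ι α : Type*} [Preorder ι] [LinearOrder α] :
    ∀ {j : ℕ} (S : Finset (ι → α)), S.card = j → (∀ d ∈ S, StrictMono d) →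
      ∀ g : Fin j → ι, StrictMono g →
        ∃ f : Fin j → ι → α, (∀ a, f a ∈ S) ∧ (∀ d ∈ S, ∃ a, f a = d) ∧
          StrictMono fun a => f a (g a)
  | 0, S, hS, _, _, _ =>
    ⟨Fin.elim0, fun a => a.elim0, fun d hd => by simp_all, fun a => a.elim0⟩
  | j + 1, S, hS, hmono, g, hg => by
    classical
    obtain ⟨d, hdS, hdmin⟩ :=
      S.exists_min_image (fun e => e (g 0)) (Finset.card_pos.mp (by omega))
    obtain ⟨f, hfS, hSf, hf⟩ := exists_diagonal_strictMono (S.erase d)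
      (by rw [Finset.card_erase_of_mem hdS, hS]; rfl)
      (fun e he => hmono e (Finset.mem_of_mem_erase he)) (g ∘ Fin.succ)
      (hg.comp (Fin.strictMono_succ))
    have hfS' a : f a ∈ S := Finset.mem_of_mem_erase (hfS a)
    refine ⟨Fin.cons d f, Fin.cases hdS hfS', fun e he => ?_, ?_⟩
    · rcases eq_or_ne e d with rfl | hne
      · exact ⟨0, rfl⟩
      · obtain ⟨a, rfl⟩ := hSf e (Finset.mem_erase.mpr ⟨hne, he⟩)
        exact ⟨a.succ, rfl⟩
    · have hcons : (fun a => (Fin.cons d f : Fin (j + 1) → ι → α) a (g a)) =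
          Fin.cons (d (g 0)) fun a => f a (g a.succ) :=
        funext (Fin.cases rfl fun _ => rfl)
      rw [hcons, Fin.strictMono_cons]
      exact ⟨fun a => (hdmin _ (hfS' a)).trans_lt (hmono _ (hfS' a) (hg (Fin.succ_pos a))), hf⟩

theorem choose_card_le_copyCount {Γ : Type*} {s t n : ℕ} (A : Fin s → Fin t → Γ)
    (T : Fin s → Fin n → Γ) (D : Finset (Fin t → Fin n))
    (hD : ∀ d ∈ D, StrictMono d ∧ ∀ i j, T i (d j) = A i j)
    (hdisj : (D : Set (Fin t → Fin n)).PairwiseDisjoint Set.range) :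
    D.card.choose t ≤ copyCount A T := by
  classical
  let metCopies (p : (Fin s → Fin s) × (Fin t → Fin n)) : Finset (Fin t → Fin n) :=
    D.filter fun d => ∃ j, p.2 j ∈ Set.range d
  have hsub : (D.powersetCard t : Set (Finset (Fin t → Fin n))) ⊆
      metCopies '' {p | IsCopy A T p.1 p.2} := by
    intro S hS
    obtain ⟨hSD, hcard⟩ := Finset.mem_powersetCard.mp hS
    obtain ⟨f, hfS, hSf, hf⟩ :=
      exists_diagonal_strictMono S hcard (fun d hd => (hD d (hSD hd)).1) id strictMono_id
    refine ⟨(id, fun j => f j j),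
      ⟨strictMono_id, hf, fun i j => (hD _ (hSD (hfS j))).2 i j⟩, ?_⟩
    ext d
    simp only [metCopies, Finset.mem_filter, Set.mem_range]
    constructor
    · rintro ⟨hdD, j, k, hk⟩
      rw [hdisj.elim_set hdD (hSD (hfS j)) _ ⟨k, hk⟩ ⟨j, rfl⟩]
      exact hfS j
    · intro hd
      obtain ⟨a, rfl⟩ := hSf d hd
      exact ⟨hSD hd, a, a, rfl⟩
  calc D.card.choose t = (D.powersetCard t : Set (Finset (Fin t → Fin n))).ncard := by
        rw [Set.ncard_coe_finset, Finset.card_powersetCard]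
    _ ≤ (metCopies '' {p | IsCopy A T p.1 p.2}).ncard := Set.ncard_le_ncard hsub
    _ ≤ copyCount A T := Set.ncard_image_le

theorem pow_le_two_mul_pow_mul_choose {m t : ℕ} (h : 2 * t ≤ m) :
    m ^ t ≤ (2 * t) ^ t * m.choose t :=
  calc m ^ t ≤ (2 * (m + 1 - t)) ^ t := Nat.pow_le_pow_left (by omega) t
    _ = 2 ^ t * (m + 1 - t) ^ t := mul_pow ..
    _ ≤ 2 ^ t * (t.factorial * m.choose t) := by
        rw [← Nat.descFactorial_eq_factorial_mul_choose]
        exact Nat.mul_le_mul_left _ (m.pow_sub_le_descFactorial t)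
    _ ≤ 2 ^ t * (t ^ t * m.choose t) :=
        Nat.mul_le_mul_left _ (Nat.mul_le_mul_right _ t.factorial_le_pow)
    _ = (2 * t) ^ t * m.choose t := by rw [mul_pow, mul_assoc]

theorem div_two_mul_pow_le_choose {x : ℝ} {m t : ℕ} (hx₀ : 0 ≤ x) (hxm : x ≤ m)
    (h : 2 * t ≤ m) : (x / (2 * t)) ^ t ≤ m.choose t := by
  rcases t.eq_zero_or_pos with rfl | ht
  · simp
  calc (x / (2 * t)) ^ t ≤ (m / (2 * t)) ^ t := by gcongr
    _ ≤ m.choose t := by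
        rw [div_pow, div_le_iff₀ (by positivity), mul_comm]
        exact_mod_cast pow_le_two_mul_pow_mul_choose h

/-- Fix an `s × t` matrix `A` over `Γ`. There are constants `c, k > 0`
such that for every `ε ∈ (0,1]` and every integer `n ≥ c·ε^{-k}`: if an `s × n` matrix `T`
over `Γ` contains at least `ε·n` pairwise-disjoint copies of `A` (each copy uses all `s`
rows and a strictly increasing choice of `t` columns; copies are disjoint iff their column
sets are disjoint), then the number of copies of `A` in `T` is at least
`(ε/(2t))^t · n^t`. -/
theorem strip_removal {Γ : Type*} {s t : ℕ} (A : Fin s → Fin t → Γ) :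
    ∃ c : ℝ, ∃ k : ℕ, 0 < c ∧ 0 < k ∧
      ∀ ε : ℝ, 0 < ε → ε ≤ 1 → ∀ n : ℕ, c / ε ^ k ≤ (n : ℝ) →
        ∀ T : Fin s → Fin n → Γ,
          (∃ D : Finset (Fin t → Fin n),
            (∀ cm ∈ D, StrictMono cm ∧ ∀ i j, T i (cm j) = A i j) ∧
            ((D : Set (Fin t → Fin n)).Pairwise
              fun p q => Disjoint (Set.range p) (Set.range q)) ∧
            ε * (n : ℝ) ≤ (D.card : ℝ)) →
          (ε / (2 * (t : ℝ))) ^ t * (n : ℝ) ^ t ≤ (copyCount A T : ℝ) := by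
  refine ⟨2 * t + 1, 1, by positivity, one_pos, ?_⟩
  rintro ε hε - n hn T ⟨D, hD, hdisj, hcard⟩
  have hεn : 2 * (t : ℝ) + 1 ≤ ε * n := by
    rw [pow_one, div_le_iff₀ hε] at hn
    linarith
  calc (ε / (2 * t)) ^ t * (n : ℝ) ^ t = (ε * n / (2 * t)) ^ t := by
        rw [← mul_pow, div_mul_eq_mul_div]
    _ ≤ D.card.choose t := by
        have hm : 2 * (t : ℝ) ≤ D.card := by linarith
        exact div_two_mul_pow_le_choose (by positivity) hcard (by exact_mod_cast hm)
    _ ≤ copyCount A T := by exact_mod_cast choose_card_le_copyCount A T D hD hdisj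
end

section
/- Fix an integer d ≥ 2 and suppose that the following Statement (1) holds: for every alphabet Γ, every d-dimensional matrix A over Γ of dimensions s₁×…×s_d, and every ε > 0, there exists δ > 0 such that for every positive integer n, every (n,d)-matrix M over Γ that contains at least ε·n^d pairwise-disjoint copies of A contains at least δ·n^{s₁+…+s_d} copies of A. Then the following Statement (2) holds: for every alphabet Γ, every d-dimensional matrix A over Γ of dimensions s₁×…×s_d, and every ε > 0, there exists δ > 0 such that for every positive integer n, every (n,d)-matrix M over Γ that contains at least ε·n^d pairwise-disjoint copies of A, every coordinate 1 ≤ i ≤ d, and every 1 ≤ j ≤ sᵢ−1, there exists a copy of A in M whose (i,j)-width is at least δ. -/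
/-- `R` is a copy of the `s₁ × ⋯ × s_d` matrix `A` inside the `(n,d)`-matrix `M`:
a `d`-tuple of strictly increasing coordinate maps along which `M` restricts to `A`. -/
def IsCopyD {Γ : Type*} {d : ℕ} {s : Fin d → ℕ} {n : ℕ}
    (A : ((i : Fin d) → Fin (s i)) → Γ) (M : (Fin d → Fin n) → Γ)
    (R : (i : Fin d) → Fin (s i) → Fin n) : Prop :=
  (∀ i, StrictMono (R i)) ∧
    ∀ j : (i : Fin d) → Fin (s i), M (fun i => R i (j i)) = A j

/-- The entry set of a copy: the product of the images of the coordinate maps. -/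
def entrySetD {d : ℕ} {s : Fin d → ℕ} {n : ℕ}
    (R : (i : Fin d) → Fin (s i) → Fin n) : Set (Fin d → Fin n) :=
  {v | ∀ i, v i ∈ Set.range (R i)}

/-- The number of copies of `A` in `M`. -/
noncomputable def copyCountD {Γ : Type*} {d : ℕ} {s : Fin d → ℕ} {n : ℕ}
    (A : ((i : Fin d) → Fin (s i)) → Γ) (M : (Fin d → Fin n) → Γ) : ℕ :=
  Set.ncard {R : (i : Fin d) → Fin (s i) → Fin n | IsCopyD A M R}

/-- `M` contains at least `K` pairwise-disjoint copies of `A`. -/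
def HasDisjointCopiesD {Γ : Type*} {d : ℕ} {s : Fin d → ℕ} {n : ℕ}
    (A : ((i : Fin d) → Fin (s i)) → Γ) (M : (Fin d → Fin n) → Γ) (K : ℝ) : Prop :=
  ∃ D : Finset ((i : Fin d) → Fin (s i) → Fin n),
    (∀ R ∈ D, IsCopyD A M R) ∧
    ((D : Set ((i : Fin d) → Fin (s i) → Fin n)).Pairwise
      fun R R' => Disjoint (entrySetD R) (entrySetD R')) ∧
    K ≤ (D.card : ℝ)

/-- Statement (1) in dimension `d`: a weak removal lemma. For every alphabet, every
pattern `A` and every `ε > 0` there is `δ > 0` such that any `(n,d)`-matrix containing at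
least `ε·n^d` pairwise-disjoint copies of `A` contains at least `δ·n^(s₁+⋯+s_d)` copies
of `A`. -/
def StatementOne (d : ℕ) : Prop :=
  ∀ (Γ : Type) (s : Fin d → ℕ) (A : ((i : Fin d) → Fin (s i)) → Γ)
    (ε : ℝ), 0 < ε →
    ∃ δ : ℝ, 0 < δ ∧
      ∀ n : ℕ, 0 < n → ∀ M : (Fin d → Fin n) → Γ,
        HasDisjointCopiesD A M (ε * (n : ℝ) ^ d) →
        δ * (n : ℝ) ^ (∑ i, s i) ≤ (copyCountD A M : ℝ)

/-- Statement (2) in dimension `d`: existence of wide copies. For every alphabet, every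
pattern `A` and every `ε > 0` there is `δ > 0` such that any `(n,d)`-matrix containing at
least `ε·n^d` pairwise-disjoint copies of `A` contains, for every coordinate `i` and every
`1 ≤ j ≤ sᵢ - 1`, a copy of `A` whose `(i,j)`-width is at least `δ`. -/
def StatementTwo (d : ℕ) : Prop :=
  ∀ (Γ : Type) (s : Fin d → ℕ) (A : ((i : Fin d) → Fin (s i)) → Γ)
    (ε : ℝ), 0 < ε →
    ∃ δ : ℝ, 0 < δ ∧
      ∀ n : ℕ, 0 < n → ∀ M : (Fin d → Fin n) → Γ,
        HasDisjointCopiesD A M (ε * (n : ℝ) ^ d) →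
        ∀ (i : Fin d) (j : ℕ) (hj : j + 1 < s i),
          ∃ R : (i : Fin d) → Fin (s i) → Fin n, IsCopyD A M R ∧
            δ ≤ (((R i ⟨j + 1, hj⟩ : ℕ) : ℝ) - ((R i ⟨j, by omega⟩ : ℕ) : ℝ)) / (n : ℝ)

section
variable {Γ : Type} {d n : ℕ} {s : Fin d → ℕ}

lemma countBound (A : ((i : Fin d) → Fin (s i)) → Γ) (M : (Fin d → Fin n) → Γ)
    (i : Fin d) (j : ℕ) (hj : j + 1 < s i) (m : ℕ)
    (hgap : ∀ R, IsCopyD A M R →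
      (R i ⟨j + 1, hj⟩ : ℕ) - (R i ⟨j, by omega⟩ : ℕ) ≤ m) :
    copyCountD A M * n ≤ n ^ (∑ i', s i') * m := by
  classical
  set S : Set ((i : Fin d) → Fin (s i) → Fin n) := {R | IsCopyD A M R} with hS
  let F : S × Fin n → ((i' : Fin d) → Fin (s i') → Fin n) × Fin m :=
    fun p => ⟨fun i' j' => if i' = i ∧ (j' : ℕ) = j + 1 then p.2 else p.1.1 i' j',
      ⟨(p.1.1 i ⟨j + 1, hj⟩ : ℕ) - (p.1.1 i ⟨j, by omega⟩ : ℕ) - 1, by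
        have h1 := hgap p.1.1 p.1.2
        have h2 : (p.1.1 i ⟨j, by omega⟩ : ℕ) < p.1.1 i ⟨j + 1, hj⟩ :=
          p.1.2.1 i (Fin.mk_lt_mk.mpr (by omega))
        omega⟩⟩
  have hF : Function.Injective F := by
    rintro ⟨⟨R, hR⟩, c⟩ ⟨⟨R', hR'⟩, c'⟩ hEq
    simp only [F, Prod.mk.injEq] at hEq
    obtain ⟨hg, hk⟩ := hEq
    have hc : c = c' := by
      have := congrFun (congrFun hg i) ⟨j + 1, hj⟩
      simpa using this
    have hoff : ∀ (i' : Fin d) (j' : Fin (s i')), ¬(i' = i ∧ (j' : ℕ) = j + 1) → R i' j' = R' i' j' := by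
      intro i' j' h
      have := congrFun (congrFun hg i') j'
      simpa [if_neg h] using this
    have hjj : R i ⟨j, by omega⟩ = R' i ⟨j, by omega⟩ :=
      hoff i ⟨j, by omega⟩ (by simp)
    have hRR : R = R' := by
      funext i' j'
      by_cases h : i' = i ∧ (j' : ℕ) = j + 1
      · obtain ⟨h1, h2⟩ := h
        subst i'
        have hj' : j' = ⟨j + 1, hj⟩ := Fin.ext h2
        subst hj'
        have l1 : (R i ⟨j, by omega⟩ : ℕ) < R i ⟨j + 1, hj⟩ :=
          hR.1 i (Fin.mk_lt_mk.mpr (by omega))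
        have l2 : (R' i ⟨j, by omega⟩ : ℕ) < R' i ⟨j + 1, hj⟩ :=
          hR'.1 i (Fin.mk_lt_mk.mpr (by omega))
        have hkv : (R i ⟨j + 1, hj⟩ : ℕ) - (R i ⟨j, by omega⟩ : ℕ) - 1
            = (R' i ⟨j + 1, hj⟩ : ℕ) - (R' i ⟨j, by omega⟩ : ℕ) - 1 :=
          congrArg Fin.val hk
        have hjv : (R i ⟨j, by omega⟩ : ℕ) = (R' i ⟨j, by omega⟩ : ℕ) :=
          congrArg Fin.val hjj
        exact Fin.ext (by omega)
      · exact hoff i' j' h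
    subst hRR hc
    rfl
  have h2 := Nat.card_le_card_of_injective F hF
  rw [Nat.card_prod, Nat.card_prod] at h2
  have hpi : Nat.card ((i' : Fin d) → Fin (s i') → Fin n) = n ^ (∑ i', s i') := by
    simp [Nat.card_eq_fintype_card, Fintype.card_pi, Fintype.card_fun,
      Finset.prod_pow_eq_pow_sum]
  rw [hpi, Nat.card_eq_fintype_card (α := Fin n), Nat.card_eq_fintype_card (α := Fin m),
    Fintype.card_fin, Fintype.card_fin, Nat.card_coe_set_eq] at h2
  exact h2

end

theorem statement_one_implies_statement_two' (d : ℕ) (hd : 2 ≤ d)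
    (h1 : StatementOne d) : StatementTwo d := by
  intro Γ s A ε hε
  obtain ⟨δ, hδ, hδb⟩ := h1 Γ s A ε hε
  refine ⟨δ / 2, by positivity, ?_⟩
  intro n hn M hM i j hj
  by_contra hcon
  push_neg at hcon
  have hb := hδb n hn M hM
  have hnR : (0 : ℝ) < n := by exact_mod_cast hn
  set m := ⌊(δ / 2) * n⌋₊ with hm
  have hgap : ∀ R, IsCopyD A M R →
      (R i ⟨j + 1, hj⟩ : ℕ) - (R i ⟨j, by omega⟩ : ℕ) ≤ m := by
    intro R hR
    have h2 := hcon R hR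
    have hlt : (R i ⟨j, by omega⟩ : ℕ) < (R i ⟨j + 1, hj⟩ : ℕ) :=
      hR.1 i (Fin.mk_lt_mk.mpr (by omega))
    rw [div_lt_iff₀ hnR] at h2
    rw [hm, Nat.le_floor_iff (by positivity)]
    rw [Nat.cast_sub hlt.le]
    push_cast
    linarith
  have hcount := countBound A M i j hj m hgap
  have hcountR : (copyCountD A M : ℝ) * n ≤ (n : ℝ) ^ (∑ i', s i') * m := by
    exact_mod_cast hcount
  have hmle : (m : ℝ) ≤ δ / 2 * n := Nat.floor_le (by positivity)
  have hpow : (0 : ℝ) < (n : ℝ) ^ (∑ i', s i') := by positivity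
  nlinarith [mul_pos hpow hnR]


/-- For every `d ≥ 2`, Statement (1) implies Statement (2). -/
theorem statement_one_implies_statement_two (d : ℕ) (hd : 2 ≤ d)
    (h1 : StatementOne d) : StatementTwo d :=
  statement_one_implies_statement_two' d hd h1
end

section
/- For every positive integer m there exists a subset X ⊆ {1,…,m} such that every quadruple (x₁,x₂,x₃,x₄) ∈ X⁴ satisfying x₁ + x₂ + x₃ = 3·x₄ has x₁ = x₂ = x₃ = x₄, and |X| ≥ m / e^{20·√(ln m)}. -/
/-!
Behrend's construction. Integer points of a fixed sphere in `ℝⁿ` admit no non-trivial solution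
of `a + b + c = 3w`: expanding, `‖a - w‖² + ‖b - w‖² + ‖c - w‖² = 2⟪3w - (a + b + c), w⟫ = 0`.
Reading the points of the box `[0, d)ⁿ` as base-`3d` numerals turns sums of three of them into
sums of numerals without carries, so the most popular sphere in the box gives a solution-free
subset of `[1, (3d)ⁿ]` with at least `dⁿ / (n d²)` elements. Taking `n ≈ √(log m)` and
`3d ≈ m^{1/n}` yields the bound; for `log m ≤ 400` the singleton `{m}` already suffices.
-/

open Finset Real

def ThreeMeanFree {α : Type*} [AddCommMonoid α] (s : Set α) : Prop :=
  ∀ ⦃a⦄, a ∈ s → ∀ ⦃b⦄, b ∈ s → ∀ ⦃c⦄, c ∈ s → ∀ ⦃w⦄, w ∈ s →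
    a + b + c = 3 • w → a = w ∧ b = w ∧ c = w

namespace ThreeMeanFree

variable {α β : Type*} [AddCommMonoid α] [AddCommMonoid β] {s : Set α}

theorem comap {t : Set β} (ht : ThreeMeanFree t) (f : α →+ β) (hf : Function.Injective f)
    (hst : Set.MapsTo f s t) : ThreeMeanFree s := by
  intro a ha b hb c hc w hw h
  obtain ⟨h₁, h₂, h₃⟩ := ht (hst ha) (hst hb) (hst hc) (hst hw)
    (by simpa only [map_add, map_nsmul] using congrArg f h)
  exact ⟨hf h₁, hf h₂, hf h₃⟩

theorem image (hs : ThreeMeanFree s) (f : α →+ β) {t : Set α} (hf : Set.InjOn f t)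
    (hst : ∀ a ∈ s, ∀ b ∈ s, ∀ c ∈ s, a + b + c ∈ t) : ThreeMeanFree (f '' s) := by
  rintro _ ⟨a, ha, rfl⟩ _ ⟨b, hb, rfl⟩ _ ⟨c, hc, rfl⟩ _ ⟨w, hw, rfl⟩ h
  have h3w : 3 • w = w + w + w := by rw [three_nsmul, add_assoc]
  have habc : a + b + c = 3 • w :=
    hf (hst a ha b hb c hc) (h3w ▸ hst w hw w hw w hw) (by simpa only [map_add, map_nsmul] using h)
  obtain ⟨rfl, rfl, rfl⟩ := hs ha hb hc hw habc
  exact ⟨rfl, rfl, rfl⟩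

theorem image_add_right {α : Type*} [AddCancelCommMonoid α] {s : Set α} (hs : ThreeMeanFree s)
    (x : α) : ThreeMeanFree ((· + x) '' s) := by
  rintro _ ⟨a, ha, rfl⟩ _ ⟨b, hb, rfl⟩ _ ⟨c, hc, rfl⟩ _ ⟨w, hw, rfl⟩
    (h : a + x + (b + x) + (c + x) = _)
  have habc : a + b + c + 3 • x = 3 • w + 3 • x := by
    rw [← nsmul_add, ← h, three_nsmul]; abel
  obtain ⟨rfl, rfl, rfl⟩ := hs ha hb hc hw (add_right_cancel habc)
  exact ⟨rfl, rfl, rfl⟩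

end ThreeMeanFree

theorem threeMeanFree_singleton {α : Type*} [AddCommMonoid α] (x : α) :
    ThreeMeanFree ({x} : Set α) := by
  rintro a rfl b rfl c rfl w rfl -
  exact ⟨rfl, rfl, rfl⟩

theorem threeMeanFree_sphere {E : Type*} [NormedAddCommGroup E] [InnerProductSpace ℝ E] (r : ℝ) :
    ThreeMeanFree (Metric.sphere (0 : E) r) := by
  intro a ha b hb c hc w hw h
  simp only [mem_sphere_zero_iff_norm] at ha hb hc hw
  have hinner : inner ℝ a w + inner ℝ b w + inner ℝ c w = 3 * r ^ 2 := by
    rw [← inner_add_left, ← inner_add_left, h, ← Nat.cast_smul_eq_nsmul ℝ, real_inner_smul_left,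
      real_inner_self_eq_norm_sq, hw]
    norm_num
  have hsum : ‖a - w‖ ^ 2 + ‖b - w‖ ^ 2 + ‖c - w‖ ^ 2 = 0 := by
    simp only [norm_sub_sq_real, ha, hb, hc, hw]
    linarith
  obtain ⟨hab, hc'⟩ := (add_eq_zero_iff_of_nonneg (by positivity) (by positivity)).mp hsum
  obtain ⟨ha', hb'⟩ := (add_eq_zero_iff_of_nonneg (by positivity) (by positivity)).mp hab
  simp only [ne_eq, OfNat.ofNat_ne_zero, not_false_eq_true, pow_eq_zero_iff, norm_eq_zero,
    sub_eq_zero] at ha' hb' hc'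
  exact ⟨ha', hb', hc'⟩

namespace Behrend

theorem threeMeanFree_sphere (n d k : ℕ) :
    ThreeMeanFree (sphere n d k : Set (Fin n → ℕ)) := by
  let f : (Fin n → ℕ) →+ EuclideanSpace ℝ (Fin n) :=
    { toFun := fun x => WithLp.toLp 2 ((↑) ∘ x)
      map_zero' := PiLp.ext fun _ => Nat.cast_zero
      map_add' := fun _ _ => PiLp.ext fun _ => Nat.cast_add _ _ }
  refine (_root_.threeMeanFree_sphere (√k)).comap f
    ((WithLp.toLp_injective 2).comp Nat.cast_injective.comp_left) fun x hx => ?_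
  rw [mem_sphere_zero_iff_norm]
  exact norm_of_mem_sphere hx

theorem map_lt_pow {n B : ℕ} {a : Fin n → ℕ} (ha : ∀ i, a i < B) : map B a < B ^ n := by
  induction n with
  | zero => simp
  | succ n ih =>
    have htail : map B (a ∘ Fin.succ) + 1 ≤ B ^ n := ih fun i => ha i.succ
    calc map B a = a 0 + map B (a ∘ Fin.succ) * B := map_succ' a
      _ < (map B (a ∘ Fin.succ) + 1) * B := by linarith [ha 0]
      _ ≤ B ^ (n + 1) := by rw [pow_succ]; exact Nat.mul_le_mul_right B htail

def behrendSet (n d k : ℕ) : Finset ℕ :=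
  (sphere n d k).image fun a => map (3 * d) a + 1

theorem behrendSet_subset_Icc (n d k : ℕ) : behrendSet n d k ⊆ Icc 1 ((3 * d) ^ n) := by
  simp only [behrendSet, image_subset_iff, mem_Icc]
  intro a ha
  have := map_lt_pow fun i => (mem_box.mp (sphere_subset_box ha) i).trans_le (by omega : d ≤ 3 * d)
  omega

theorem card_behrendSet (n d k : ℕ) : #(behrendSet n d k) = #(sphere n d k) := by
  refine card_image_of_injOn fun a ha b hb hab => map_injOn ?_ ?_ (Nat.add_right_cancel hab)
  all_goals exact fun i => (mem_box.mp (sphere_subset_box ‹_›) i).trans_le (by omega)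

theorem threeMeanFree_behrendSet (n d k : ℕ) : ThreeMeanFree (behrendSet n d k : Set ℕ) := by
  rw [behrendSet, coe_image, ← Set.image_image (· + 1)]
  refine ((threeMeanFree_sphere n d k).image (map (3 * d)) map_injOn ?_).image_add_right 1
  intro a ha b hb c hc i
  have := mem_box.mp (sphere_subset_box ha) i
  have := mem_box.mp (sphere_subset_box hb) i
  have := mem_box.mp (sphere_subset_box hc) i
  simp only [Pi.add_apply]
  omega

theorem exists_threeMeanFree_subset_Icc {n d m : ℕ} (hm : (3 * d) ^ n ≤ m) :
    ∃ X : Finset ℕ, X ⊆ Icc 1 m ∧ ThreeMeanFree (X : Set ℕ) ∧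
      ((d ^ n : ℕ) / (n * d ^ 2 : ℕ) : ℝ) ≤ #X := by
  obtain ⟨k, hk⟩ := exists_large_sphere n d
  exact ⟨behrendSet n d k, (behrendSet_subset_Icc n d k).trans (Icc_subset_Icc_right hm),
    threeMeanFree_behrendSet n d k, by rwa [card_behrendSet]⟩

end Behrend

theorem le_four_mul_floor_div_three {x : ℝ} (hx : 12 ≤ x) : x ≤ 4 * ⌊x / 3⌋₊ := by
  linarith [Nat.sub_one_lt_floor (x / 3)]

theorem four_pow_mul_le_exp (n : ℕ) : (4 : ℝ) ^ n * n ≤ exp (3 * n) := by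
  have h4 : (4 : ℝ) ≤ exp 2 := by
    rw [show (2 : ℝ) = 1 + 1 by norm_num, exp_add]
    nlinarith [add_one_le_exp 1]
  calc (4 : ℝ) ^ n * n ≤ exp 2 ^ n * exp n := by
        gcongr
        linarith [add_one_le_exp n]
    _ = exp (3 * n) := by rw [← exp_nat_mul, ← exp_add]; ring_nf

theorem le_exp_twenty_mul_sqrt {t : ℝ} (h₀ : 0 ≤ t) (h₄₀₀ : t ≤ 400) : exp t ≤ exp (20 * √t) := by
  have hs : √t ≤ 20 := by
    rw [show (20 : ℝ) = √(20 ^ 2) by rw [sqrt_sq (by norm_num)]]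
    exact sqrt_le_sqrt (by linarith)
  rw [exp_le_exp]
  nlinarith [mul_self_sqrt h₀, sqrt_nonneg t]

theorem exists_behrend_parameters {t : ℝ} (ht : 400 < t) :
    ∃ n d : ℕ, ((3 * d : ℕ) : ℝ) ^ n ≤ exp t ∧
      exp t / exp (20 * √t) ≤ ((d ^ n : ℕ) / (n * d ^ 2 : ℕ) : ℝ) := by
  set s := √t
  have hs : 20 < s := by
    rw [show (20 : ℝ) = √(20 ^ 2) by rw [sqrt_sq (by norm_num)]]
    exact sqrt_lt_sqrt (by norm_num) (by linarith)
  have hst : s ^ 2 = t := sq_sqrt (by linarith)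
  set n := ⌈s⌉₊
  have hsn : s ≤ n := Nat.le_ceil s
  have hns : (n : ℝ) < s + 1 := Nat.ceil_lt_add_one (by linarith)
  set q := t / n
  have hqn : q * n = t := div_mul_cancel₀ t (by positivity)
  have hqs : q ≤ s := by
    rw [div_le_iff₀ (by linarith)]
    nlinarith
  have hq : 12 ≤ exp q := by
    have : s - 1 ≤ q := by
      rw [le_div_iff₀ (by linarith)]
      nlinarith
    linarith [add_one_le_exp q]
  set d := ⌊exp q / 3⌋₊
  have hd3 : 3 * (d : ℝ) ≤ exp q := by linarith [Nat.floor_le (by positivity : 0 ≤ exp q / 3)]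
  have hd4 : exp q ≤ 4 * d := le_four_mul_floor_div_three hq
  have hexp : exp t = exp q ^ n := by rw [← hqn, mul_comm, exp_nat_mul]
  refine ⟨n, d, ?_, ?_⟩
  · push_cast
    rw [hexp]
    exact pow_le_pow_left₀ (by positivity) hd3 n
  · have hd : 0 < (d : ℝ) := by linarith
    push_cast
    rw [div_le_div_iff₀ (exp_pos _) (by positivity)]
    calc exp t * (n * d ^ 2) ≤ (4 * d) ^ n * (n * exp q ^ 2) := by
          rw [hexp]
          gcongr
          linarith
      _ = d ^ n * (4 ^ n * n * exp q ^ 2) := by ring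
      _ ≤ d ^ n * (exp (3 * n) * exp q ^ 2) := by gcongr; exact four_pow_mul_le_exp n
      _ ≤ d ^ n * exp (20 * s) := by
          rw [sq, ← exp_add, ← exp_add]
          gcongr
          linarith

/-- Behrend-type construction. For every positive integer `m` there is
a subset `X ⊆ {1,…,m}` with no non-trivial solution to `x₁ + x₂ + x₃ = 3·x₄` and with
`|X| ≥ m / e^{20·√(ln m)}`. -/
theorem behrend_type_set (m : ℕ) (hm : 0 < m) :
    ∃ X : Finset ℕ,
      X ⊆ Finset.Icc 1 m ∧
      (∀ x₁ ∈ X, ∀ x₂ ∈ X, ∀ x₃ ∈ X, ∀ x₄ ∈ X,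
        x₁ + x₂ + x₃ = 3 * x₄ → x₁ = x₄ ∧ x₂ = x₄ ∧ x₃ = x₄) ∧
      (m : ℝ) / Real.exp (20 * Real.sqrt (Real.log m)) ≤ (X.card : ℝ) := by
  suffices ∃ X : Finset ℕ, X ⊆ Icc 1 m ∧ ThreeMeanFree (X : Set ℕ) ∧
      (m : ℝ) / exp (20 * √(log m)) ≤ #X by
    obtain ⟨X, hXm, hX, hcard⟩ := this
    exact ⟨X, hXm, fun _ h₁ _ h₂ _ h₃ _ h₄ => hX h₁ h₂ h₃ h₄, hcard⟩
  have hexp : exp (log m) = m := exp_log (by exact_mod_cast hm)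
  rcases le_or_gt (log m) 400 with hsmall | hlarge
  · refine ⟨{m}, singleton_subset_iff.mpr (mem_Icc.mpr ⟨hm, le_rfl⟩),
      by simpa using threeMeanFree_singleton m, ?_⟩
    rw [card_singleton, Nat.cast_one, div_le_one (exp_pos _)]
    exact hexp.symm.le.trans (le_exp_twenty_mul_sqrt (log_natCast_nonneg m) hsmall)
  · obtain ⟨n, d, hpow, hbound⟩ := exists_behrend_parameters hlarge
    obtain ⟨X, hXm, hX, hcard⟩ :=
      Behrend.exists_threeMeanFree_subset_Icc (m := m) (by exact_mod_cast hexp ▸ hpow)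
    exact ⟨X, hXm, hX, (hexp ▸ hbound).trans hcard⟩
end

section
/- Let δ ∈ (0,1), let r be a positive integer, and let M be an n×n binary matrix. If M has a (δ²/16, r)-row-clustering 𝓡 = {R₀, R₁, …, R_r} and a (δ²/16, r)-column-clustering 𝓒 = {C₀, C₁, …, C_r}, then the pair (𝓡, 𝓒), viewed as partitions of the rows and of the columns into r+1 parts each, is a (δ, r+1)-partition of M; that is, the total number of entries of M lying in blocks Rᵢ×Cⱼ that are not δ-homogeneous is at most δ·n². -/
open Finset

/-- A `(δ, r)`-row-clustering of the `n × n` binary matrix `M`, given by a labelling `g`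
of the rows by `r + 1` clusters: cluster `0` (the error cluster) has at most `δ·n` rows,
and any two rows in the same cluster `a ≠ 0` differ in at most `δ·n` entries. -/
def IsRowClustering {n r : ℕ} (M : Fin n → Fin n → Bool) (δ : ℝ)
    (g : Fin n → Fin (r + 1)) : Prop :=
  ((univ.filter fun i : Fin n => g i = 0).card : ℝ) ≤ δ * n ∧
  ∀ a : Fin (r + 1), a ≠ 0 → ∀ i i' : Fin n, g i = a → g i' = a →
    ((univ.filter fun j : Fin n => M i j ≠ M i' j).card : ℝ) ≤ δ * n

/-- A `(δ, r)`-column-clustering of `M`: a row-clustering of its transpose. -/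
def IsColClustering {n r : ℕ} (M : Fin n → Fin n → Bool) (δ : ℝ)
    (g : Fin n → Fin (r + 1)) : Prop :=
  IsRowClustering (fun i j => M j i) δ g

/-- The block of `M` consisting of the rows labelled `a` by `g` and the columns labelled
`b` by `h` is `δ`-homogeneous: some value `v ∈ {0,1}` occupies at least a `(1-δ)`-fraction
of its entries. -/
def BlockHomog {n r : ℕ} (M : Fin n → Fin n → Bool) (δ : ℝ)
    (g h : Fin n → Fin (r + 1)) (a b : Fin (r + 1)) : Prop :=
  ∃ v : Bool,
    (1 - δ) * (((univ.filter fun i : Fin n => g i = a).card : ℝ) *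
        ((univ.filter fun j : Fin n => h j = b).card : ℝ)) ≤
      ((univ.filter fun p : Fin n × Fin n =>
          g p.1 = a ∧ h p.2 = b ∧ M p.1 p.2 = v).card : ℝ)


/-!
Take a block `R × C` whose row and column labels are both nonzero and in which neither value
fills a `(1 - δ)`-fraction. Then `#zeros · #ones ≥ δ (|R||C|)² / 2`. For a zero at `(i, j)` and a
one at `(i', j')`, the corner entry `(i, j')` differs either from `(i, j)`, so that columns `j`
and `j'` disagree in row `i`, or from `(i', j')`, so that rows `i` and `i'` disagree in column
`j'`. Hence `δ |R||C| ≤ 2 (D_col / |C| + D_row / |R|)`, where `D_row` counts the triples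
`(i, i', j) ∈ R × R × C` with `M i j ≠ M i' j`. Summing over the column clusters, the row terms of
the blocks in a row cluster `R` add up to at most `|R| · δ² n / 16`, so all row terms together
are at most `δ² n² / 16`, and likewise for the columns: the bad blocks with nonzero labels cover
at most `δ n² / 4` entries. The rows and columns labelled `0` add at most `δ² n² / 8`.
-/

open Function

section Disagreement

variable {α β : Type*}

def rowDisagreement (M : α → β → Bool) (R : Finset α) (C : Finset β) : ℕ :=
  ∑ i ∈ R, ∑ i' ∈ R, #{j ∈ C | M i j ≠ M i' j}

theorem card_false_mul_card_true_le (M : α → β → Bool) (R : Finset α) (C : Finset β) :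
    #{p ∈ R ×ˢ C | M p.1 p.2 = false} * #{p ∈ R ×ˢ C | M p.1 p.2 = true} ≤
      #R * rowDisagreement (swap M) C R + #C * rowDisagreement M R C := by
  have hcount (v : Bool) :
      #{p ∈ R ×ˢ C | M p.1 p.2 = v} = ∑ i ∈ R, ∑ j ∈ C, if M i j = v then 1 else 0 := by
    rw [card_filter, sum_product]
  have hcorner (i i' : α) (j j' : β) :
      (if M i j = false then 1 else 0) * (if M i' j' = true then 1 else 0) ≤
        (if M i j ≠ M i j' then 1 else 0) + (if M i j' ≠ M i' j' then 1 else 0) := by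
    cases M i j <;> cases M i j' <;> cases M i' j' <;> simp
  have hcols : ∑ i ∈ R, ∑ i' ∈ R, ∑ j ∈ C, ∑ j' ∈ C, (if M i j ≠ M i j' then 1 else 0) =
      #R * rowDisagreement (swap M) C R := by
    simp only [rowDisagreement, card_filter, swap, sum_const, smul_eq_mul, ← mul_sum]
    rw [sum_comm]
    exact congrArg _ (sum_congr rfl fun _ _ => sum_comm)
  have hrows : ∑ i ∈ R, ∑ i' ∈ R, ∑ j ∈ C, ∑ j' ∈ C, (if M i j' ≠ M i' j' then 1 else 0) =
      #C * rowDisagreement M R C := by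
    simp only [rowDisagreement, card_filter, sum_const, smul_eq_mul, mul_sum]
  calc _ = ∑ i ∈ R, ∑ i' ∈ R, ∑ j ∈ C, ∑ j' ∈ C,
        (if M i j = false then 1 else 0) * (if M i' j' = true then 1 else 0) := by
        simp only [hcount, sum_mul_sum]
    _ ≤ ∑ i ∈ R, ∑ i' ∈ R, ∑ j ∈ C, ∑ j' ∈ C,
        ((if M i j ≠ M i j' then 1 else 0) + (if M i j' ≠ M i' j' then 1 else 0)) := by
        gcongr with i _ i' _ j _ j' _
        exact hcorner i i' j j'
    _ = _ := by simp only [sum_add_distrib, hcols, hrows]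

theorem rowDisagreement_le {ε : ℝ} (M : α → β → Bool) (R : Finset α) (C : Finset β)
    (hclose : ∀ i ∈ R, ∀ i' ∈ R, (#{j ∈ C | M i j ≠ M i' j} : ℝ) ≤ ε) :
    (rowDisagreement M R C : ℝ) ≤ #R * #R * ε := by
  unfold rowDisagreement
  push_cast
  calc _ ≤ ∑ _i ∈ R, ∑ _i' ∈ R, ε :=
        sum_le_sum fun i hi => sum_le_sum fun i' hi' => hclose i hi i' hi'
    _ = _ := by simp only [sum_const, nsmul_eq_mul]; ring

theorem sum_rowDisagreement_fiberwise {κ : Type*} [Fintype β] [Fintype κ] [DecidableEq κ]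
    (M : α → β → Bool) (R : Finset α) (h : β → κ) :
    ∑ b, rowDisagreement M R {j | h j = b} = rowDisagreement M R univ := by
  unfold rowDisagreement
  rw [sum_comm]
  refine sum_congr rfl fun i _ => ?_
  rw [sum_comm]
  refine sum_congr rfl fun i' _ => ?_
  simp only [filter_comm (fun j => h j = _), sum_card_fiberwise_eq_card_filter, mem_univ,
    filter_true]

theorem mul_add_sq_le_two_mul_mul {δ x y : ℝ} (hx : 0 ≤ x) (hy : 0 ≤ y)
    (hδx : δ * (x + y) < x) (hδy : δ * (x + y) < y) : δ * (x + y) ^ 2 ≤ 2 * x * y := by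
  rcases le_total x y with hxy | hxy <;> nlinarith

theorem mul_card_le_of_forall_card_lt {δ : ℝ} (M : α → β → Bool) (R : Finset α) (C : Finset β)
    (hbad : ∀ v, (#{p ∈ R ×ˢ C | M p.1 p.2 = v} : ℝ) < (1 - δ) * (#R * #C)) :
    δ * (#R * #C) ≤
      2 * ((rowDisagreement (swap M) C R : ℝ) / #C + (rowDisagreement M R C : ℝ) / #R) := by
  have hZO : (#{p ∈ R ×ˢ C | M p.1 p.2 = false} : ℝ) + #{p ∈ R ×ˢ C | M p.1 p.2 = true} =
      #R * #C := by
    have := card_filter_add_card_filter_not (s := R ×ˢ C) (fun p => M p.1 p.2 = false)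
    simp only [Bool.not_eq_false, card_product] at this
    exact_mod_cast this
  have hcount : (#{p ∈ R ×ˢ C | M p.1 p.2 = false} : ℝ) * #{p ∈ R ×ˢ C | M p.1 p.2 = true} ≤
      #R * (rowDisagreement (swap M) C R : ℝ) + #C * rowDisagreement M R C := by
    exact_mod_cast card_false_mul_card_true_le M R C
  have hZ := hbad false
  have hO := hbad true
  rw [← hZO] at hZ hO
  have hZ0 : (0 : ℝ) ≤ #{p ∈ R ×ˢ C | M p.1 p.2 = false} := Nat.cast_nonneg _
  have hO0 : (0 : ℝ) ≤ #{p ∈ R ×ˢ C | M p.1 p.2 = true} := Nat.cast_nonneg _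
  generalize (#{p ∈ R ×ˢ C | M p.1 p.2 = false} : ℝ) = Z at *
  generalize (#{p ∈ R ×ˢ C | M p.1 p.2 = true} : ℝ) = O at *
  have hRC : (0 : ℝ) < #R * #C := by
    rw [← hZO]
    refine (add_nonneg hZ0 hO0).lt_of_ne fun h => ?_
    rw [← h, mul_zero] at hZ
    linarith
  have hR : (0 : ℝ) < #R := pos_of_mul_pos_left hRC (by positivity)
  have hC : (0 : ℝ) < #C := pos_of_mul_pos_right hRC (by positivity)
  have hsq : δ * (#R * #C) ^ 2 ≤ 2 * Z * O := by
    rw [← hZO]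
    exact mul_add_sq_le_two_mul_mul hZ0 hO0 (by linarith) (by linarith)
  rw [div_add_div _ _ hC.ne' hR.ne', mul_div_assoc', le_div_iff₀ (by positivity)]
  nlinarith

end Disagreement

section Product

variable {α β : Type*} [Fintype α] [Fintype β]

theorem card_filter_fst (p : α → Prop) [DecidablePred p] :
    #{x : α × β | p x.1} = #{a | p a} * Fintype.card β := by
  rw [← univ_product_univ, filter_product_left, card_product, card_univ]

theorem card_filter_snd (p : β → Prop) [DecidablePred p] :
    #{x : α × β | p x.2} = Fintype.card α * #{b | p b} := by
  rw [← univ_product_univ, filter_product_right, card_product, card_univ]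

theorem card_filter_pair_mem_eq_sum {κ ι : Type*} [DecidableEq κ] [DecidableEq ι] (g : α → κ)
    (h : β → ι) (B : Finset (κ × ι)) :
    #{p : α × β | (g p.1, h p.2) ∈ B} = ∑ ab ∈ B, #{i | g i = ab.1} * #{j | h j = ab.2} := by
  rw [card_eq_sum_card_fiberwise (f := fun p : α × β => (g p.1, h p.2)) (t := B)
    fun p hp => by simpa using hp]
  refine sum_congr rfl fun ab hab => ?_
  rw [← card_product]
  congr 1
  ext p
  simp only [mem_filter, mem_univ, true_and, mem_product, Prod.ext_iff]
  exact ⟨And.right, fun hp => ⟨hp.1 ▸ hp.2 ▸ hab, hp⟩⟩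

end Product

section Clustering

variable {n r : ℕ}

theorem mul_card_mul_card_le_of_not_blockHomog {δ : ℝ} {M : Fin n → Fin n → Bool}
    {g h : Fin n → Fin (r + 1)} {a b : Fin (r + 1)} (hbad : ¬ BlockHomog M δ g h a b) :
    δ * (#{i | g i = a} * #{j | h j = b}) ≤
      2 * ((rowDisagreement (swap M) {j | h j = b} {i | g i = a} : ℝ) / #{j | h j = b} +
        (rowDisagreement M {i | g i = a} {j | h j = b} : ℝ) / #{i | g i = a}) := by
  refine mul_card_le_of_forall_card_lt M _ _ fun v =>
    lt_of_not_ge fun hle => hbad ⟨v, hle.trans_eq ?_⟩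
  congr 2
  ext
  simp [and_assoc]

theorem IsRowClustering.sum_rowDisagreement_div_le {κ : Type*} [Fintype κ] [DecidableEq κ]
    {δ : ℝ} {M : Fin n → Fin n → Bool} {g : Fin n → Fin (r + 1)} (hg : IsRowClustering M δ g)
    (h : Fin n → κ) :
    ∑ a ∈ {a | a ≠ 0}, ∑ b, (rowDisagreement M {i | g i = a} {j | h j = b} : ℝ) /
      #{i | g i = a} ≤ δ * n * n := by
  obtain ⟨hzero, hclose⟩ := hg
  have hδn : 0 ≤ δ * n := (Nat.cast_nonneg _).trans hzero
  have hcluster : ∀ a ∈ ({a | a ≠ 0} : Finset (Fin (r + 1))),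
      ∑ b, (rowDisagreement M {i | g i = a} {j | h j = b} : ℝ) / #{i | g i = a} ≤
        #{i | g i = a} * (δ * n) := by
    intro a ha
    rw [← sum_div, ← Nat.cast_sum, sum_rowDisagreement_fiberwise]
    refine div_le_of_le_mul₀ (Nat.cast_nonneg _) (by positivity) ?_
    calc _ ≤ (#{i | g i = a} : ℝ) * #{i | g i = a} * (δ * n) :=
          rowDisagreement_le M _ univ fun i hi i' hi' =>
            hclose a (by simpa using ha) i i' (by simpa using hi) (by simpa using hi')
      _ = _ := by ring
  calc _ ≤ ∑ a ∈ {a | a ≠ 0}, (#{i | g i = a} : ℝ) * (δ * n) := sum_le_sum hcluster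
    _ ≤ ∑ a, (#{i | g i = a} : ℝ) * (δ * n) :=
        sum_le_sum_of_subset_of_nonneg (subset_univ _) fun _ _ _ => by positivity
    _ = δ * n * n := by
        rw [← sum_mul, ← Nat.cast_sum, ← card_eq_sum_card_fiberwise (by simp)]
        simp only [card_univ, Fintype.card_fin]
        ring

theorem mul_sum_card_mul_card_le_of_clustering {δ ε : ℝ} {M : Fin n → Fin n → Bool}
    {g h : Fin n → Fin (r + 1)} (hg : IsRowClustering M ε g) (hh : IsColClustering M ε h)
    (bad : Finset (Fin (r + 1) × Fin (r + 1)))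
    (hbad : ∀ ab ∈ bad, ¬ BlockHomog M δ g h ab.1 ab.2 ∧ ab.1 ≠ 0 ∧ ab.2 ≠ 0) :
    δ * ∑ ab ∈ bad, (#{i | g i = ab.1} * #{j | h j = ab.2} : ℝ) ≤ 4 * (ε * n * n) := by
  set X : Fin (r + 1) × Fin (r + 1) → ℝ := fun ab =>
    (rowDisagreement (swap M) {j | h j = ab.2} {i | g i = ab.1} : ℝ) / #{j | h j = ab.2}
  set Y : Fin (r + 1) × Fin (r + 1) → ℝ := fun ab =>
    (rowDisagreement M {i | g i = ab.1} {j | h j = ab.2} : ℝ) / #{i | g i = ab.1}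
  have hX : ∑ ab ∈ bad, X ab ≤ ε * n * n :=
    calc _ ≤ ∑ ab ∈ univ ×ˢ ({b | b ≠ 0} : Finset (Fin (r + 1))), X ab :=
          sum_le_sum_of_subset_of_nonneg (fun ab hab => by simp [(hbad ab hab).2.2])
            fun _ _ _ => by positivity
      _ = ∑ b ∈ {b | b ≠ 0}, ∑ a, X (a, b) := sum_product_right ..
      _ ≤ _ := hh.sum_rowDisagreement_div_le g
  have hY : ∑ ab ∈ bad, Y ab ≤ ε * n * n :=
    calc _ ≤ ∑ ab ∈ ({a | a ≠ 0} : Finset (Fin (r + 1))) ×ˢ univ, Y ab :=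
          sum_le_sum_of_subset_of_nonneg (fun ab hab => by simp [(hbad ab hab).2.1])
            fun _ _ _ => by positivity
      _ = ∑ a ∈ {a | a ≠ 0}, ∑ b, Y (a, b) := sum_product ..
      _ ≤ _ := hg.sum_rowDisagreement_div_le h
  calc _ = ∑ ab ∈ bad, δ * (#{i | g i = ab.1} * #{j | h j = ab.2} : ℝ) := mul_sum ..
    _ ≤ ∑ ab ∈ bad, 2 * (X ab + Y ab) := sum_le_sum fun ab hab =>
        mul_card_mul_card_le_of_not_blockHomog (hbad ab hab).1
    _ = 2 * (∑ ab ∈ bad, X ab + ∑ ab ∈ bad, Y ab) := by rw [← mul_sum, sum_add_distrib]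
    _ ≤ 4 * (ε * n * n) := by linarith

theorem ncard_not_blockHomog_le {δ ε : ℝ} (hδ : 0 < δ) {M : Fin n → Fin n → Bool}
    {g h : Fin n → Fin (r + 1)} (hg : IsRowClustering M ε g) (hh : IsColClustering M ε h) :
    (Set.ncard {p : Fin n × Fin n | ¬ BlockHomog M δ g h (g p.1) (h p.2)} : ℝ) ≤
      (2 + 4 / δ) * (ε * n * n) := by
  classical
  let bad : Finset (Fin (r + 1) × Fin (r + 1)) :=
    {ab | ¬ BlockHomog M δ g h ab.1 ab.2 ∧ ab.1 ≠ 0 ∧ ab.2 ≠ 0}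
  have hcover : ({p : Fin n × Fin n | ¬ BlockHomog M δ g h (g p.1) (h p.2)}.ncard : ℝ) ≤
      #{p : Fin n × Fin n | g p.1 = 0} + #{p : Fin n × Fin n | h p.2 = 0} +
        #{p : Fin n × Fin n | (g p.1, h p.2) ∈ bad} := by
    norm_cast
    rw [Set.ncard_eq_toFinset_card', Set.toFinset_ofPred]
    refine (card_le_card fun p hp => ?_).trans
      ((card_union_le _ _).trans (Nat.add_le_add_right (card_union_le _ _) _))
    simp only [bad, mem_filter, mem_union, mem_univ, true_and] at hp ⊢
    tauto
  have hrows : (#{p : Fin n × Fin n | g p.1 = 0} : ℝ) ≤ ε * n * n := by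
    rw [card_filter_fst (fun i => g i = 0), Fintype.card_fin, Nat.cast_mul]
    exact mul_le_mul_of_nonneg_right hg.1 (Nat.cast_nonneg n)
  have hcols : (#{p : Fin n × Fin n | h p.2 = 0} : ℝ) ≤ ε * n * n := by
    rw [card_filter_snd (fun j => h j = 0), Fintype.card_fin, Nat.cast_mul, mul_comm]
    exact mul_le_mul_of_nonneg_right hh.1 (Nat.cast_nonneg n)
  have hblocks : δ * (#{p : Fin n × Fin n | (g p.1, h p.2) ∈ bad} : ℝ) ≤
      4 * (ε * n * n) := by
    rw [card_filter_pair_mem_eq_sum]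
    push_cast
    exact mul_sum_card_mul_card_le_of_clustering hg hh bad fun ab hab => (mem_filter.1 hab).2
  have hgood : (#{p : Fin n × Fin n | (g p.1, h p.2) ∈ bad} : ℝ) ≤ 4 / δ * (ε * n * n) := by
    rw [div_mul_eq_mul_div, le_div_iff₀' hδ]
    exact hblocks
  linarith

end Clustering

theorem clustering_gives_partition_general {n r : ℕ} (δ : ℝ) (hδ : 0 < δ)
    (hδ1 : δ < 1) (M : Fin n → Fin n → Bool) (g h : Fin n → Fin (r + 1))
    (hg : IsRowClustering M (δ ^ 2 / 16) g) (hh : IsColClustering M (δ ^ 2 / 16) h) :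
    (Set.ncard {p : Fin n × Fin n | ¬ BlockHomog M δ g h (g p.1) (h p.2)} : ℝ) ≤
      δ * (n : ℝ) ^ 2 := by
  calc _ ≤ (2 + 4 / δ) * (δ ^ 2 / 16 * n * n) := ncard_not_blockHomog_le hδ hg hh
    _ = (δ ^ 2 / 8 + δ / 4) * (n * n) := by field_simp; ring
    _ ≤ δ * (n * n) := mul_le_mul_of_nonneg_right (by nlinarith) (by positivity)
    _ = δ * n ^ 2 := by ring

/-- If an `n × n` binary matrix `M` has a `(δ²/16, r)`-row-clustering
`g` and a `(δ²/16, r)`-column-clustering `h`, then the pair, viewed as partitions of the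
rows and the columns into `r+1` parts each, is a `(δ, r+1)`-partition of `M`: the number
of entries of `M` lying in blocks that are not `δ`-homogeneous is at most `δ·n²`. -/
theorem clustering_gives_partition {n r : ℕ} (hr : 0 < r) (δ : ℝ) (hδ : 0 < δ)
    (hδ1 : δ < 1) (M : Fin n → Fin n → Bool) (g h : Fin n → Fin (r + 1))
    (hg : IsRowClustering M (δ ^ 2 / 16) g) (hh : IsColClustering M (δ ^ 2 / 16) h) :
    (Set.ncard {p : Fin n × Fin n | ¬ BlockHomog M δ g h (g p.1) (h p.2)} : ℝ) ≤
      δ * (n : ℝ) ^ 2 :=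
  clustering_gives_partition_general δ hδ hδ1 M g h hg hh
end
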